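/- arXiv:2210.15254 — 3 statements merged into one kernel-verified Lean document; each statement's English description precedes it below -/
import Mathlib

section
/- Let f, g : [a,b] → ℝ be twice continuously differentiable and set h = f + g. Suppose there exists a unique x₀ ∈ (a,b) with h(x₀) = max_{x∈[a,b]} h(x) and h''(x₀) < 0. Then lim_{n→∞} (∫_a^b exp(n f(x) + √(n(n-1)) g(x)) dx) / (exp(n f(x₀) + √(n(n-1)) g(x₀)) · √(2π/(n(−h''(x₀))))) = 1. -/
open MeasureTheory Real Filter



lemma aux_isMaxOn_of_deriv2 {u u' u'' : ℝ → ℝ} {x₀ δ : ℝ} (hδ : 0 < δ)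
    (hu : ∀ x ∈ Set.Icc (x₀-δ) (x₀+δ), HasDerivAt u (u' x) x)
    (hu' : ∀ x ∈ Set.Icc (x₀-δ) (x₀+δ), HasDerivAt u' (u'' x) x)
    (h0 : u' x₀ = 0)
    (hneg : ∀ x ∈ Set.Icc (x₀-δ) (x₀+δ), u'' x ≤ 0) :
    ∀ x ∈ Set.Icc (x₀-δ) (x₀+δ), u x ≤ u x₀ := by
  set J := Set.Icc (x₀-δ) (x₀+δ) with hJ
  have hx₀J : x₀ ∈ J := ⟨by linarith, by linarith⟩
  have hanti : AntitoneOn u' J := by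
    apply antitoneOn_of_deriv_nonpos (convex_Icc _ _)
    · exact fun x hx => (hu' x hx).continuousAt.continuousWithinAt
    · intro x hx
      exact ((hu' x (interior_subset hx)).differentiableAt).differentiableWithinAt
    · intro x hx
      rw [(hu' x (interior_subset hx)).deriv]
      exact hneg x (interior_subset hx)
  intro x hx
  rcases le_total x x₀ with hle | hle
  · have hsub : Set.Icc x x₀ ⊆ J := Set.Icc_subset_Icc hx.1 hx₀J.2
    have hmono : MonotoneOn u (Set.Icc x x₀) := by
      apply monotoneOn_of_deriv_nonneg (convex_Icc _ _)
      · exact fun y hy => (hu y (hsub hy)).continuousAt.continuousWithinAt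
      · intro y hy
        exact ((hu y (hsub (interior_subset hy))).differentiableAt).differentiableWithinAt
      · intro y hy
        rw [(hu y (hsub (interior_subset hy))).deriv]
        have hyJ : y ∈ J := hsub (interior_subset hy)
        have : u' x₀ ≤ u' y := hanti hyJ hx₀J (interior_subset hy).2
        linarith [h0 ▸ this]
    exact hmono (Set.left_mem_Icc.2 hle) (Set.right_mem_Icc.2 hle) hle
  · have hsub : Set.Icc x₀ x ⊆ J := Set.Icc_subset_Icc hx₀J.1 hx.2
    have hmono : AntitoneOn u (Set.Icc x₀ x) := by
      apply antitoneOn_of_deriv_nonpos (convex_Icc _ _)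
      · exact fun y hy => (hu y (hsub hy)).continuousAt.continuousWithinAt
      · intro y hy
        exact ((hu y (hsub (interior_subset hy))).differentiableAt).differentiableWithinAt
      · intro y hy
        rw [(hu y (hsub (interior_subset hy))).deriv]
        have hyJ : y ∈ J := hsub (interior_subset hy)
        have : u' y ≤ u' x₀ := hanti hx₀J hyJ (interior_subset hy).1
        linarith [h0 ▸ this]
    exact hmono (Set.left_mem_Icc.2 hle) (Set.right_mem_Icc.2 hle) hle

lemma aux_gauss_upper {k δ : ℝ} (hk : 0 < k) (hδ : 0 ≤ δ) :
    ∫ x in (-δ)..δ, Real.exp (-k * x^2) ≤ Real.sqrt (π / k) := by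
  rw [intervalIntegral.integral_of_le (by linarith)]
  calc ∫ x in Set.Ioc (-δ) δ, Real.exp (-k*x^2)
      ≤ ∫ x : ℝ, Real.exp (-k*x^2) :=
        setIntegral_le_integral (integrable_exp_neg_mul_sq hk)
          (ae_of_all _ fun x => (Real.exp_pos _).le)
    _ = Real.sqrt (π/k) := integral_gaussian k

lemma aux_gauss_lower {k δ : ℝ} (hk : 0 < k) (hδ : 0 ≤ δ) :
    Real.sqrt (π/k) - Real.exp (-(k*δ^2)/2) * Real.sqrt (2*π/k)
      ≤ ∫ x in (-δ)..δ, Real.exp (-k * x^2) := by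
  have hint : Integrable (fun x : ℝ => Real.exp (-k*x^2)) := integrable_exp_neg_mul_sq hk
  have hint2 : Integrable (fun x : ℝ => Real.exp (-(k/2)*x^2)) :=
    integrable_exp_neg_mul_sq (half_pos hk)
  have hsplit := integral_add_compl (measurableSet_Ioc (a := -δ) (b := δ)) hint
  have htail : ∫ x in (Set.Ioc (-δ) δ)ᶜ, Real.exp (-k*x^2)
      ≤ Real.exp (-(k*δ^2)/2) * Real.sqrt (2*π/k) := by
    have hpt : ∀ x ∈ (Set.Ioc (-δ) δ)ᶜ,
        Real.exp (-k*x^2) ≤ Real.exp (-(k*δ^2)/2) * Real.exp (-(k/2)*x^2) := by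
      intro x hx
      rw [← Real.exp_add]
      apply Real.exp_le_exp.2
      have hx2 : δ^2 ≤ x^2 := by
        rcases not_and_or.1 hx with h1 | h1
        · push_neg at h1
          nlinarith
        · push_neg at h1
          nlinarith
      nlinarith
    calc ∫ x in (Set.Ioc (-δ) δ)ᶜ, Real.exp (-k*x^2)
        ≤ ∫ x in (Set.Ioc (-δ) δ)ᶜ, Real.exp (-(k*δ^2)/2) * Real.exp (-(k/2)*x^2) := by
          apply setIntegral_mono_on hint.integrableOn (hint2.const_mul _).integrableOn
            (measurableSet_Ioc.compl) hpt
      _ ≤ ∫ x : ℝ, Real.exp (-(k*δ^2)/2) * Real.exp (-(k/2)*x^2) :=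
          setIntegral_le_integral (hint2.const_mul _)
            (ae_of_all _ fun x => by positivity)
      _ = Real.exp (-(k*δ^2)/2) * Real.sqrt (π/(k/2)) := by
          rw [integral_const_mul, integral_gaussian]
      _ = Real.exp (-(k*δ^2)/2) * Real.sqrt (2*π/k) := by
          congr 2; field_simp
  have hgauss : ∫ x : ℝ, Real.exp (-k*x^2) = Real.sqrt (π/k) := integral_gaussian k
  rw [intervalIntegral.integral_of_le (by linarith)]
  linarith [hsplit, htail, hgauss]

lemma aux_decay {K η : ℝ} (hK : 0 ≤ K) (hη : 0 < η) :
    Tendsto (fun n : ℕ => Real.sqrt (n * K) * Real.exp (-(n*η))) atTop (nhds 0) := by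
  have hreal : Tendsto (fun x : ℝ => x * Real.exp (-(x*η))) atTop (nhds 0) := by
    have h1 : Tendsto (fun y : ℝ => (y/η) * Real.exp (-y)) atTop (nhds 0) := by
      have := (tendsto_pow_mul_exp_neg_atTop_nhds_zero 1).div_const η
      simpa [div_mul_eq_mul_div, pow_one] using this
    have h2 : Tendsto (fun x : ℝ => x * η) atTop atTop :=
      Tendsto.atTop_mul_const hη tendsto_id
    have h3 := h1.comp h2
    refine h3.congr fun x => ?_
    simp only [Function.comp]
    rw [mul_comm x η, mul_div_assoc]
    field_simp [hη.ne']
  have hnat : Tendsto (fun n : ℕ => (n:ℝ) * Real.exp (-(n*η))) atTop (nhds 0) :=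
    hreal.comp tendsto_natCast_atTop_atTop
  have hsq : Tendsto (fun n : ℕ => Real.sqrt K * ((n:ℝ) * Real.exp (-(n*η)))) atTop (nhds 0) := by
    simpa using hnat.const_mul (Real.sqrt K)
  apply squeeze_zero (fun n => by positivity) _ hsq
  intro n
  have h1 : Real.sqrt ((n:ℝ) * K) ≤ Real.sqrt K * n := by
    rcases Nat.eq_zero_or_pos n with rfl | hn
    · simp
    · have hn1 : (1:ℝ) ≤ n := by exact_mod_cast hn
      rw [mul_comm (n:ℝ) K, Real.sqrt_mul hK]
      have hs : Real.sqrt (n:ℝ) ≤ n := by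
        nlinarith [Real.sq_sqrt (by linarith : (0:ℝ) ≤ (n:ℝ)), Real.sqrt_nonneg (n:ℝ)]
      have := Real.sqrt_nonneg K
      nlinarith
  have h2 : (0:ℝ) < Real.exp (-(n*η)) := Real.exp_pos _
  calc Real.sqrt (n * K) * Real.exp (-(n*η)) ≤ (Real.sqrt K * n) * Real.exp (-(n*η)) := by
        apply mul_le_mul_of_nonneg_right h1 h2.le
    _ = Real.sqrt K * ((n:ℝ) * Real.exp (-(n*η))) := by ring


set_option maxHeartbeats 2000000 in
/-- Laplace-type asymptotics for `∫_a^b exp(n f + √(n(n-1)) g)`. -/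
theorem laplace_asymptotics
    (a b : ℝ) (hab : a < b) (f g : ℝ → ℝ)
    (hf : ContDiffOn ℝ 2 f (Set.Icc a b)) (hg : ContDiffOn ℝ 2 g (Set.Icc a b))
    (h : ℝ → ℝ) (hh : h = f + g)
    (x₀ : ℝ) (hx₀ : x₀ ∈ Set.Ioo a b)
    (hmax : ∀ x ∈ Set.Icc a b, h x ≤ h x₀)
    (huniq : ∀ x ∈ Set.Icc a b, h x = h x₀ → x = x₀)
    (hsec : iteratedDeriv 2 h x₀ < 0) :
    Tendsto
      (fun n : ℕ =>
        (∫ x in a..b, Real.exp (n * f x + Real.sqrt (n * (n - 1)) * g x)) /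
          (Real.exp (n * f x₀ + Real.sqrt (n * (n - 1)) * g x₀) *
            Real.sqrt (2 * Real.pi / (n * (-(iteratedDeriv 2 h x₀))))))
      atTop (nhds 1) := by
  set c := -(iteratedDeriv 2 h x₀) with hcdef
  have hc : 0 < c := by rw [hcdef]; linarith
  have hx₀I : x₀ ∈ Set.Icc a b := Set.Ioo_subset_Icc_self hx₀
  have hfgC : ContDiffOn ℝ 2 h (Set.Icc a b) := by rw [hh]; exact hf.add hg
  have hO : IsOpen (Set.Ioo a b) := isOpen_Ioo
  have hhO : ContDiffOn ℝ 2 h (Set.Ioo a b) := hfgC.mono Set.Ioo_subset_Icc_self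
  -- derivatives
  have hdiff : DifferentiableOn ℝ h (Set.Ioo a b) := hhO.differentiableOn (by norm_num)
  have hd1 : ∀ x ∈ Set.Ioo a b, HasDerivAt h (deriv h x) x := fun x hx =>
    ((hdiff x hx).differentiableAt (hO.mem_nhds hx)).hasDerivAt
  have hC1 : ContDiffOn ℝ 1 (deriv h) (Set.Ioo a b) := hhO.deriv_of_isOpen hO (by norm_num)
  have hdiff2 : DifferentiableOn ℝ (deriv h) (Set.Ioo a b) := hC1.differentiableOn (by norm_num)
  have hd2 : ∀ x ∈ Set.Ioo a b, HasDerivAt (deriv h) (deriv (deriv h) x) x := fun x hx =>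
    ((hdiff2 x hx).differentiableAt (hO.mem_nhds hx)).hasDerivAt
  have hC2cont : ContinuousOn (deriv (deriv h)) (Set.Ioo a b) :=
    (hC1.deriv_of_isOpen hO (by norm_num) : ContDiffOn ℝ 0 _ _).continuousOn
  have hiter : deriv (deriv h) x₀ = -c := by
    rw [hcdef, iteratedDeriv_succ, iteratedDeriv_one, neg_neg]
  have hlocmax : IsLocalMax h x₀ := by
    filter_upwards [hO.mem_nhds hx₀] with y hy using hmax y (Set.Ioo_subset_Icc_self hy)
  have hderiv0 : deriv h x₀ = 0 := hlocmax.deriv_eq_zero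
  -- gap lemma
  have gap : ∀ δ : ℝ, 0 < δ → ∃ η : ℝ, 0 < η ∧
      ∀ x ∈ Set.Icc a b, δ ≤ |x - x₀| → h x ≤ h x₀ - η := by
    intro δ hδ
    set K := Set.Icc a b ∩ {x | δ ≤ |x - x₀|} with hKdef
    by_cases hK : K.Nonempty
    · have hKc : IsCompact K := isCompact_Icc.inter_right
        (isClosed_le continuous_const ((continuous_id.sub continuous_const).abs))
      obtain ⟨y, hyK, hy⟩ := hKc.exists_isMaxOn hK
        (hfgC.continuousOn.mono Set.inter_subset_left)
      have hylt : h y < h x₀ := by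
        rcases lt_or_eq_of_le (hmax y hyK.1) with hlt | heq
        · exact hlt
        · exfalso
          have := huniq y hyK.1 heq
          rw [this] at hyK
          have := hyK.2
          simp at this
          linarith
      refine ⟨h x₀ - h y, by linarith, fun x hx hxd => ?_⟩
      have hxy : h x ≤ h y := isMaxOn_iff.1 hy x (Set.mem_inter hx hxd)
      linarith
    · refine ⟨1, one_pos, fun x hx hxd => ?_⟩
      exact absurd ⟨x, Set.mem_inter hx hxd⟩ hK
  -- bound on g
  obtain ⟨G₀, hG₀⟩ := isCompact_Icc.exists_bound_of_continuousOn hg.continuousOn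
  set G := max G₀ 0 with hGdef
  have hG : ∀ x ∈ Set.Icc a b, |g x| ≤ G := fun x hx =>
    le_trans (by simpa using hG₀ x hx) (le_max_left _ _)
  have hGnn : 0 ≤ G := le_max_right _ _
  -- the normalized quantities
  set ψ : ℕ → ℝ → ℝ := fun n x =>
    n*(h x - h x₀) + (Real.sqrt (n*((n:ℝ)-1)) - n)*(g x - g x₀) with hψdef
  set P : ℕ → ℝ := fun n => ∫ x in a..b, Real.exp (ψ n x) with hPdef
  set D : ℕ → ℝ := fun n => Real.sqrt (2*π/(n*c)) with hDdef
  -- continuity and integrability of the integrand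
  have hψcont : ∀ n : ℕ, ContinuousOn (fun x => Real.exp (ψ n x)) (Set.Icc a b) := by
    intro n
    apply Real.continuous_exp.comp_continuousOn
    simp only [hψdef]
    exact (continuousOn_const.mul (hfgC.continuousOn.sub continuousOn_const)).add
      (continuousOn_const.mul ((hg.continuousOn).sub continuousOn_const))
  have hInt : ∀ n : ℕ, ∀ p q : ℝ, p ∈ Set.Icc a b → q ∈ Set.Icc a b → p ≤ q →
      IntervalIntegrable (fun x => Real.exp (ψ n x)) volume p q := by
    intro n p q hp hq hpq
    apply ContinuousOn.intervalIntegrable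
    apply (hψcont n).mono
    rw [Set.uIcc_of_le hpq]
    exact Set.Icc_subset_Icc hp.1 hq.2
  -- reduction of the goal
  have hEq : ∀ n : ℕ,
      (∫ x in a..b, Real.exp (n * f x + Real.sqrt (n * ((n:ℝ) - 1)) * g x)) /
        (Real.exp (n * f x₀ + Real.sqrt (n * ((n:ℝ) - 1)) * g x₀) *
          Real.sqrt (2 * π / (n * c))) = P n / D n := by
    intro n
    have hE : (0:ℝ) < Real.exp (n * f x₀ + Real.sqrt (n * ((n:ℝ) - 1)) * g x₀) :=
      Real.exp_pos _
    have h1 : (∫ x in a..b, Real.exp (n * f x + Real.sqrt (n * ((n:ℝ) - 1)) * g x)) =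
        Real.exp (n * f x₀ + Real.sqrt (n * ((n:ℝ) - 1)) * g x₀) * P n := by
      simp only [hPdef, hψdef]
      rw [← intervalIntegral.integral_const_mul]
      apply intervalIntegral.integral_congr
      intro x hx
      simp only []
      rw [← Real.exp_add]
      congr 1
      simp only [hh, Pi.add_apply]
      ring
    rw [h1, hDdef, mul_div_mul_left _ _ (ne_of_gt hE)]
  suffices hmain : Tendsto (fun n : ℕ => P n / D n) atTop (nhds 1) by
    exact hmain.congr fun n => (hEq n).symm
  have key : ∀ ε : ℝ, 0 < ε → ε < c →
      (∀ᶠ n : ℕ in atTop, P n / D n ≤ Real.exp ε * Real.sqrt (c/(c-ε)) + ε) ∧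
      (∀ᶠ n : ℕ in atTop, Real.exp (-ε) * Real.sqrt (c/(c+ε)) - ε ≤ P n / D n) := by
    intro ε hε hεc
    have hce : 0 < c - ε := sub_pos.2 hεc
    have hπ := Real.pi_pos
    obtain ⟨δ₁, hδ₁, hb₁⟩ := Metric.continuousAt_iff.1
      (hC2cont.continuousAt (hO.mem_nhds hx₀)) ε hε
    obtain ⟨δ₂, hδ₂, hb₂⟩ := Metric.continuousAt_iff.1
      (hg.continuousOn.continuousAt (Icc_mem_nhds hx₀.1 hx₀.2)) ε hε
    obtain ⟨δ₃, hδ₃, hball⟩ := Metric.isOpen_iff.1 hO x₀ hx₀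
    have hm : 0 < min δ₁ (min δ₂ δ₃) := lt_min hδ₁ (lt_min hδ₂ hδ₃)
    set δ := min δ₁ (min δ₂ δ₃) / 2 with hδdef
    have hδpos : 0 < δ := by rw [hδdef]; linarith
    have hJmem : ∀ x ∈ Set.Icc (x₀-δ) (x₀+δ), dist x x₀ < min δ₁ (min δ₂ δ₃) := by
      intro x hx
      rw [Real.dist_eq]
      have h1 := hx.1; have h2 := hx.2
      have habs : |x - x₀| ≤ δ := abs_le.2 ⟨by linarith, by linarith⟩
      rw [hδdef] at habs
      linarith
    have hJO : Set.Icc (x₀-δ) (x₀+δ) ⊆ Set.Ioo a b := by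
      intro x hx
      apply hball
      rw [Metric.mem_ball]
      exact lt_of_lt_of_le (hJmem x hx) (le_trans (min_le_right _ _) (min_le_right _ _))
    have hJI : Set.Icc (x₀-δ) (x₀+δ) ⊆ Set.Icc a b :=
      fun x hx => Set.Ioo_subset_Icc_self (hJO hx)
    have hJa : a ≤ x₀ - δ := le_of_lt (hJO ⟨le_rfl, by linarith⟩).1
    have hJb : x₀ + δ ≤ b := le_of_lt (hJO ⟨by linarith, le_rfl⟩).2
    have hJg : ∀ x ∈ Set.Icc (x₀-δ) (x₀+δ), |g x - g x₀| ≤ ε := by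
      intro x hx
      have := hb₂ (lt_of_lt_of_le (hJmem x hx) (le_trans (min_le_right _ _) (min_le_left _ _)))
      rw [Real.dist_eq] at this
      exact this.le
    have hJ2 : ∀ x ∈ Set.Icc (x₀-δ) (x₀+δ),
        -(c+ε) ≤ deriv (deriv h) x ∧ deriv (deriv h) x ≤ -(c-ε) := by
      intro x hx
      have hb := hb₁ (lt_of_lt_of_le (hJmem x hx) (min_le_left _ _))
      rw [Real.dist_eq, hiter] at hb
      have hb' := abs_lt.1 hb
      constructor <;> [linarith [hb'.1]; linarith [hb'.2]]
    -- Taylor-type bounds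
    have hsq : ∀ x : ℝ, HasDerivAt (fun y : ℝ => (y-x₀)^2) (2*(x-x₀)) x := by
      intro x
      simpa using ((hasDerivAt_id' x).sub_const x₀).fun_pow 2
    have hderA : ∀ x ∈ Set.Icc (x₀-δ) (x₀+δ),
        HasDerivAt (fun y => h y + ((c-ε)/2)*(y-x₀)^2) (deriv h x + (c-ε)*(x-x₀)) x := by
      intro x hx
      have h4 : HasDerivAt (fun y : ℝ => ((c-ε)/2)*(y-x₀)^2) ((c-ε)*(x-x₀)) x := by
        have := (hsq x).const_mul ((c-ε)/2)
        exact this.congr_deriv (by ring)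
      exact (hd1 x (hJO hx)).add h4
    have hderA' : ∀ x ∈ Set.Icc (x₀-δ) (x₀+δ),
        HasDerivAt (fun y => deriv h y + (c-ε)*(y-x₀)) (deriv (deriv h) x + (c-ε)) x := by
      intro x hx
      have h4 : HasDerivAt (fun y : ℝ => (c-ε)*(y-x₀)) (c-ε) x := by
        simpa using ((hasDerivAt_id x).sub_const x₀).const_mul (c-ε)
      exact (hd2 x (hJO hx)).add h4
    have T1 := aux_isMaxOn_of_deriv2 hδpos hderA hderA'
      (by simp [hderiv0]) (fun x hx => by linarith [(hJ2 x hx).2])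
    have T1' : ∀ x ∈ Set.Icc (x₀-δ) (x₀+δ), h x - h x₀ ≤ -((c-ε)/2)*(x-x₀)^2 := by
      intro x hx
      have := T1 x hx
      nlinarith [this]
    have hderB : ∀ x ∈ Set.Icc (x₀-δ) (x₀+δ),
        HasDerivAt (fun y => -h y - ((c+ε)/2)*(y-x₀)^2) (-deriv h x - (c+ε)*(x-x₀)) x := by
      intro x hx
      have h4 : HasDerivAt (fun y : ℝ => ((c+ε)/2)*(y-x₀)^2) ((c+ε)*(x-x₀)) x := by
        have := (hsq x).const_mul ((c+ε)/2)
        exact this.congr_deriv (by ring)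
      exact ((hd1 x (hJO hx)).neg).sub h4
    have hderB' : ∀ x ∈ Set.Icc (x₀-δ) (x₀+δ),
        HasDerivAt (fun y => -deriv h y - (c+ε)*(y-x₀)) (-(deriv (deriv h) x) - (c+ε)) x := by
      intro x hx
      have h4 : HasDerivAt (fun y : ℝ => (c+ε)*(y-x₀)) (c+ε) x := by
        simpa using ((hasDerivAt_id x).sub_const x₀).const_mul (c+ε)
      exact ((hd2 x (hJO hx)).neg).sub h4
    have T2 := aux_isMaxOn_of_deriv2 hδpos hderB hderB'
      (by simp [hderiv0]) (fun x hx => by linarith [(hJ2 x hx).1])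
    have T2' : ∀ x ∈ Set.Icc (x₀-δ) (x₀+δ), -((c+ε)/2)*(x-x₀)^2 ≤ h x - h x₀ := by
      intro x hx
      have := T2 x hx
      nlinarith [this]
    obtain ⟨η, hη, hηp⟩ := gap δ hδpos
    -- bounds on sqrt (n (n-1)) - n
    have hsb : ∀ n : ℕ, 1 ≤ n →
        -1 ≤ Real.sqrt (n*((n:ℝ)-1)) - n ∧ Real.sqrt (n*((n:ℝ)-1)) - n ≤ 0 := by
      intro n hn
      have hn1 : (1:ℝ) ≤ n := by exact_mod_cast hn
      have hup : Real.sqrt ((n:ℝ)*((n:ℝ)-1)) ≤ n := by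
        have h1 : Real.sqrt ((n:ℝ)*((n:ℝ)-1)) ≤ Real.sqrt ((n:ℝ)*(n:ℝ)) :=
          Real.sqrt_le_sqrt (by nlinarith)
        rwa [Real.sqrt_mul_self (by linarith)] at h1
      have hlo : (n:ℝ)-1 ≤ Real.sqrt ((n:ℝ)*((n:ℝ)-1)) := by
        have h1 : Real.sqrt (((n:ℝ)-1)*((n:ℝ)-1)) ≤ Real.sqrt ((n:ℝ)*((n:ℝ)-1)) :=
          Real.sqrt_le_sqrt (by nlinarith)
        rwa [Real.sqrt_mul_self (by linarith)] at h1
      exact ⟨by linarith, by linarith⟩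
    -- common per-n facts
    have hmem1 : (x₀-δ) ∈ Set.Icc a b := ⟨hJa, by linarith⟩
    have hmem2 : (x₀+δ) ∈ Set.Icc a b := ⟨by linarith, hJb⟩
    constructor
    · -- upper bound
      have hKnn : (0:ℝ) ≤ c/(2*π) := by positivity
      have htail0 : Tendsto (fun n : ℕ =>
          (2*(b-a)*Real.exp (2*G)) * (Real.sqrt (n*(c/(2*π))) * Real.exp (-(n*η))))
          atTop (nhds 0) := by
        simpa using (aux_decay hKnn hη).const_mul (2*(b-a)*Real.exp (2*G))
      filter_upwards [eventually_ge_atTop 1, htail0.eventually_lt_const hε] with n hn hsmall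
      have hn0 : (0:ℝ) < n := by exact_mod_cast hn
      have hk : (0:ℝ) < (n:ℝ)*(c-ε)/2 := by positivity
      have hα := hsb n hn
      have hDpos : 0 < D n := by
        rw [hDdef]
        exact Real.sqrt_pos.2 (by positivity)
      have i1 := hInt n a (x₀-δ) ⟨le_rfl, hab.le⟩ hmem1 hJa
      have i2 := hInt n (x₀-δ) (x₀+δ) hmem1 hmem2 (by linarith)
      have i3 := hInt n (x₀+δ) b hmem2 ⟨hab.le, le_rfl⟩ hJb
      have i23 := hInt n (x₀-δ) b hmem1 ⟨hab.le, le_rfl⟩ (by linarith)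
      have e2 := intervalIntegral.integral_add_adjacent_intervals i2 i3
      have e1 := intervalIntegral.integral_add_adjacent_intervals i1 i23
      have hsplit : P n = (∫ x in a..(x₀-δ), Real.exp (ψ n x)) +
          (∫ x in (x₀-δ)..(x₀+δ), Real.exp (ψ n x)) +
          (∫ x in (x₀+δ)..b, Real.exp (ψ n x)) := by
        simp only [hPdef]
        linarith [e1, e2]
      have hgauss_cont : Continuous (fun x : ℝ => Real.exp (-((n:ℝ)*(c-ε)/2) * (x-x₀)^2)) := by
        exact Real.continuous_exp.comp (continuous_const.mul ((continuous_id.sub continuous_const).pow 2))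
      have hCup : (∫ x in (x₀-δ)..(x₀+δ), Real.exp (ψ n x)) ≤
          Real.exp ε * Real.sqrt (π/((n:ℝ)*(c-ε)/2)) := by
        have step1 : (∫ x in (x₀-δ)..(x₀+δ), Real.exp (ψ n x)) ≤
            ∫ x in (x₀-δ)..(x₀+δ), Real.exp ε * Real.exp (-((n:ℝ)*(c-ε)/2) * (x-x₀)^2) := by
          apply intervalIntegral.integral_mono_on (by linarith) i2
            ((continuous_const.mul hgauss_cont).intervalIntegrable _ _)
          intro x hx
          rw [Pi.mul_apply, ← Real.exp_add]
          simp only [hψdef]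
          apply Real.exp_le_exp.2
          have t1 := T1' x hx
          have t2 := hJg x hx
          have habs : (Real.sqrt (n*((n:ℝ)-1)) - n)*(g x - g x₀) ≤ ε := by
            have h1 : |Real.sqrt (n*((n:ℝ)-1)) - (n:ℝ)| ≤ 1 :=
              abs_le.2 ⟨hα.1, by linarith [hα.2]⟩
            calc (Real.sqrt (n*((n:ℝ)-1)) - n)*(g x - g x₀)
                ≤ |(Real.sqrt (n*((n:ℝ)-1)) - n)*(g x - g x₀)| := le_abs_self _
              _ = |Real.sqrt (n*((n:ℝ)-1)) - (n:ℝ)| * |g x - g x₀| := abs_mul _ _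
              _ ≤ 1 * ε := mul_le_mul h1 t2 (abs_nonneg _) zero_le_one
              _ = ε := one_mul ε
          nlinarith [mul_le_mul_of_nonneg_left t1 (le_of_lt hn0)]
        have step2 : (∫ x in (x₀-δ)..(x₀+δ), Real.exp (-((n:ℝ)*(c-ε)/2) * (x-x₀)^2)) =
            ∫ u in (-δ)..δ, Real.exp (-((n:ℝ)*(c-ε)/2) * u^2) := by
          have hcs := intervalIntegral.integral_comp_sub_right (a := x₀-δ) (b := x₀+δ)
            (fun u => Real.exp (-((n:ℝ)*(c-ε)/2) * u^2)) x₀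
          rw [hcs]
          congr 1 <;> ring
        calc (∫ x in (x₀-δ)..(x₀+δ), Real.exp (ψ n x))
            ≤ ∫ x in (x₀-δ)..(x₀+δ), Real.exp ε * Real.exp (-((n:ℝ)*(c-ε)/2) * (x-x₀)^2) := step1
          _ = Real.exp ε * ∫ x in (x₀-δ)..(x₀+δ), Real.exp (-((n:ℝ)*(c-ε)/2) * (x-x₀)^2) :=
              intervalIntegral.integral_const_mul _ _
          _ = Real.exp ε * ∫ u in (-δ)..δ, Real.exp (-((n:ℝ)*(c-ε)/2) * u^2) := by rw [step2]
          _ ≤ Real.exp ε * Real.sqrt (π/((n:ℝ)*(c-ε)/2)) :=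
              mul_le_mul_of_nonneg_left (aux_gauss_upper hk hδpos.le) (Real.exp_pos ε).le
      have htailb : ∀ p q : ℝ, a ≤ p → q ≤ b → p ≤ q → (∀ x ∈ Set.Icc p q, δ ≤ |x - x₀|) →
          (∫ x in p..q, Real.exp (ψ n x)) ≤ (b-a)*(Real.exp (2*G) * Real.exp (-(n*η))) := by
        intro p q hpa hqb hpq hfar
        have hpI : p ∈ Set.Icc a b := ⟨hpa, le_trans hpq hqb⟩
        have hqI : q ∈ Set.Icc a b := ⟨le_trans hpa hpq, hqb⟩
        have step1 : (∫ x in p..q, Real.exp (ψ n x)) ≤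
            ∫ _x in p..q, Real.exp (2*G) * Real.exp (-(n*η)) := by
          apply intervalIntegral.integral_mono_on hpq (hInt n p q hpI hqI hpq)
            intervalIntegrable_const
          intro x hx
          rw [← Real.exp_add]
          simp only [hψdef]
          apply Real.exp_le_exp.2
          have hxI : x ∈ Set.Icc a b := ⟨le_trans hpa hx.1, le_trans hx.2 hqb⟩
          have t1 := hηp x hxI (hfar x hx)
          have habs : (Real.sqrt (n*((n:ℝ)-1)) - n)*(g x - g x₀) ≤ 2*G := by
            have h1 : |Real.sqrt (n*((n:ℝ)-1)) - (n:ℝ)| ≤ 1 :=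
              abs_le.2 ⟨(hsb n hn).1, by linarith [(hsb n hn).2]⟩
            have h2 : |g x - g x₀| ≤ 2*G := by
              calc |g x - g x₀| ≤ |g x| + |g x₀| := abs_sub _ _
                _ ≤ G + G := add_le_add (hG x hxI) (hG x₀ hx₀I)
                _ = 2*G := by ring
            calc (Real.sqrt (n*((n:ℝ)-1)) - n)*(g x - g x₀)
                ≤ |(Real.sqrt (n*((n:ℝ)-1)) - n)*(g x - g x₀)| := le_abs_self _
              _ = |Real.sqrt (n*((n:ℝ)-1)) - (n:ℝ)| * |g x - g x₀| := abs_mul _ _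
              _ ≤ 1 * (2*G) := mul_le_mul h1 h2 (abs_nonneg _) zero_le_one
              _ = 2*G := one_mul _
          nlinarith [mul_le_mul_of_nonneg_left (show h x - h x₀ ≤ -η by linarith) (le_of_lt hn0)]
        calc (∫ x in p..q, Real.exp (ψ n x))
            ≤ ∫ _x in p..q, Real.exp (2*G) * Real.exp (-(n*η)) := step1
          _ = (q - p) * (Real.exp (2*G) * Real.exp (-(n*η))) := by
              rw [intervalIntegral.integral_const, smul_eq_mul]
          _ ≤ (b-a)*(Real.exp (2*G) * Real.exp (-(n*η))) :=
              mul_le_mul_of_nonneg_right (by linarith) (by positivity)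
      have hT1 := htailb a (x₀-δ) le_rfl (by linarith) hJa
        (fun x hx => le_abs.2 (Or.inr (by linarith [hx.2])))
      have hT2 := htailb (x₀+δ) b (by linarith) le_rfl hJb
        (fun x hx => le_abs.2 (Or.inl (by linarith [hx.1])))
      have hPub : P n ≤ Real.exp ε * Real.sqrt (π/((n:ℝ)*(c-ε)/2)) +
          2*((b-a)*(Real.exp (2*G)*Real.exp (-(n*η)))) := by
        rw [hsplit]
        linarith
      have hsqrtq : Real.sqrt (π/((n:ℝ)*(c-ε)/2)) / D n = Real.sqrt (c/(c-ε)) := by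
        rw [hDdef]
        simp only
        rw [← Real.sqrt_div (by positivity)]
        congr 1
        field_simp
      have hDinv : Real.exp (-(n*η)) / D n = Real.sqrt ((n:ℝ)*(c/(2*π))) * Real.exp (-(n*η)) := by
        rw [hDdef]
        rw [div_eq_mul_inv, ← Real.sqrt_inv, inv_div, mul_div_assoc]
        exact mul_comm _ _
      calc P n / D n ≤ (Real.exp ε * Real.sqrt (π/((n:ℝ)*(c-ε)/2)) +
            2*((b-a)*(Real.exp (2*G)*Real.exp (-(n*η))))) / D n :=
            (div_le_div_iff_of_pos_right hDpos).2 hPub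
        _ = Real.exp ε * Real.sqrt (c/(c-ε)) +
            (2*(b-a)*Real.exp (2*G)) * (Real.sqrt ((n:ℝ)*(c/(2*π))) * Real.exp (-(n*η))) := by
            rw [add_div]
            congr 1
            · rw [mul_div_assoc, hsqrtq]
            · have hrr : 2*((b-a)*(Real.exp (2*G)*Real.exp (-(n*η))))/D n =
                  (2*(b-a)*Real.exp (2*G)) * (Real.exp (-(n*η))/D n) := by
                ring
              rw [hrr, hDinv]
        _ ≤ Real.exp ε * Real.sqrt (c/(c-ε)) + ε := by linarith
    · -- lower bound
      have hβ : (0:ℝ) < (c+ε)*δ^2/4 := by positivity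
      have hsub0 : Tendsto (fun n : ℕ =>
          Real.sqrt (2*c/(c+ε)) * Real.exp (-((n:ℝ)*((c+ε)*δ^2/4)))) atTop (nhds 0) := by
        have hexp : Tendsto (fun n : ℕ => Real.exp (-((n:ℝ)*((c+ε)*δ^2/4)))) atTop (nhds 0) := by
          apply Real.tendsto_exp_atBot.comp
          exact tendsto_neg_atTop_atBot.comp
            (Tendsto.atTop_mul_const hβ tendsto_natCast_atTop_atTop)
        simpa using hexp.const_mul (Real.sqrt (2*c/(c+ε)))
      filter_upwards [eventually_ge_atTop 1, hsub0.eventually_lt_const hε] with n hn hsmall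
      have hn0 : (0:ℝ) < n := by exact_mod_cast hn
      have hcε : (0:ℝ) < c + ε := by linarith
      have hk' : (0:ℝ) < (n:ℝ)*(c+ε)/2 := by positivity
      have hα := hsb n hn
      have hDpos : 0 < D n := by
        rw [hDdef]
        exact Real.sqrt_pos.2 (by positivity)
      have i1 := hInt n a (x₀-δ) ⟨le_rfl, hab.le⟩ hmem1 hJa
      have i2 := hInt n (x₀-δ) (x₀+δ) hmem1 hmem2 (by linarith)
      have i3 := hInt n (x₀+δ) b hmem2 ⟨hab.le, le_rfl⟩ hJb
      have i23 := hInt n (x₀-δ) b hmem1 ⟨hab.le, le_rfl⟩ (by linarith)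
      have e2 := intervalIntegral.integral_add_adjacent_intervals i2 i3
      have e1 := intervalIntegral.integral_add_adjacent_intervals i1 i23
      have hsplit : P n = (∫ x in a..(x₀-δ), Real.exp (ψ n x)) +
          (∫ x in (x₀-δ)..(x₀+δ), Real.exp (ψ n x)) +
          (∫ x in (x₀+δ)..b, Real.exp (ψ n x)) := by
        simp only [hPdef]
        linarith [e1, e2]
      have hTnn1 : 0 ≤ ∫ x in a..(x₀-δ), Real.exp (ψ n x) :=
        intervalIntegral.integral_nonneg hJa (fun x _ => (Real.exp_pos _).le)
      have hTnn2 : 0 ≤ ∫ x in (x₀+δ)..b, Real.exp (ψ n x) :=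
        intervalIntegral.integral_nonneg hJb (fun x _ => (Real.exp_pos _).le)
      have hgauss_cont : Continuous (fun x : ℝ => Real.exp (-((n:ℝ)*(c+ε)/2) * (x-x₀)^2)) := by
        exact Real.continuous_exp.comp (continuous_const.mul ((continuous_id.sub continuous_const).pow 2))
      have hClow : Real.exp (-ε) * (Real.sqrt (π/((n:ℝ)*(c+ε)/2)) -
          Real.exp (-(((n:ℝ)*(c+ε)/2)*δ^2)/2) * Real.sqrt (2*π/((n:ℝ)*(c+ε)/2)))
          ≤ ∫ x in (x₀-δ)..(x₀+δ), Real.exp (ψ n x) := by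
        have step0 := aux_gauss_lower (k := (n:ℝ)*(c+ε)/2) (δ := δ) hk' hδpos.le
        have step1 : (∫ u in (-δ)..δ, Real.exp (-((n:ℝ)*(c+ε)/2) * u^2)) =
            ∫ x in (x₀-δ)..(x₀+δ), Real.exp (-((n:ℝ)*(c+ε)/2) * (x-x₀)^2) := by
          have hcs := intervalIntegral.integral_comp_sub_right (a := x₀-δ) (b := x₀+δ)
            (fun u => Real.exp (-((n:ℝ)*(c+ε)/2) * u^2)) x₀
          rw [hcs]
          congr 1 <;> ring
        have step2 : (∫ x in (x₀-δ)..(x₀+δ),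
              Real.exp (-ε) * Real.exp (-((n:ℝ)*(c+ε)/2) * (x-x₀)^2))
            ≤ ∫ x in (x₀-δ)..(x₀+δ), Real.exp (ψ n x) := by
          apply intervalIntegral.integral_mono_on (by linarith)
            ((continuous_const.mul hgauss_cont).intervalIntegrable _ _) i2
          intro x hx
          rw [Pi.mul_apply, ← Real.exp_add]
          simp only [hψdef]
          apply Real.exp_le_exp.2
          have t1 := T2' x hx
          have t2 := hJg x hx
          have habs : -ε ≤ (Real.sqrt (n*((n:ℝ)-1)) - n)*(g x - g x₀) := by
            have h1 : |Real.sqrt (n*((n:ℝ)-1)) - (n:ℝ)| ≤ 1 :=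
              abs_le.2 ⟨hα.1, by linarith [hα.2]⟩
            have h2 : |(Real.sqrt (n*((n:ℝ)-1)) - n)*(g x - g x₀)| ≤ ε := by
              rw [abs_mul]
              calc |Real.sqrt (n*((n:ℝ)-1)) - (n:ℝ)| * |g x - g x₀|
                  ≤ 1 * ε := mul_le_mul h1 t2 (abs_nonneg _) zero_le_one
                _ = ε := one_mul ε
            have h3 := neg_abs_le ((Real.sqrt (n*((n:ℝ)-1)) - n)*(g x - g x₀))
            linarith
          nlinarith [mul_le_mul_of_nonneg_left t1 (le_of_lt hn0)]
        calc Real.exp (-ε) * (Real.sqrt (π/((n:ℝ)*(c+ε)/2)) -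
              Real.exp (-(((n:ℝ)*(c+ε)/2)*δ^2)/2) * Real.sqrt (2*π/((n:ℝ)*(c+ε)/2)))
            ≤ Real.exp (-ε) * ∫ u in (-δ)..δ, Real.exp (-((n:ℝ)*(c+ε)/2) * u^2) :=
              mul_le_mul_of_nonneg_left step0 (Real.exp_pos _).le
          _ = Real.exp (-ε) * ∫ x in (x₀-δ)..(x₀+δ), Real.exp (-((n:ℝ)*(c+ε)/2) * (x-x₀)^2) := by
              rw [step1]
          _ = ∫ x in (x₀-δ)..(x₀+δ), Real.exp (-ε) * Real.exp (-((n:ℝ)*(c+ε)/2) * (x-x₀)^2) :=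
              (intervalIntegral.integral_const_mul _ _).symm
          _ ≤ ∫ x in (x₀-δ)..(x₀+δ), Real.exp (ψ n x) := step2
      have hPlb : Real.exp (-ε) * (Real.sqrt (π/((n:ℝ)*(c+ε)/2)) -
          Real.exp (-(((n:ℝ)*(c+ε)/2)*δ^2)/2) * Real.sqrt (2*π/((n:ℝ)*(c+ε)/2))) ≤ P n := by
        rw [hsplit]
        linarith
      have hsqrtq : Real.sqrt (π/((n:ℝ)*(c+ε)/2)) / D n = Real.sqrt (c/(c+ε)) := by
        rw [hDdef]
        simp only
        rw [← Real.sqrt_div (by positivity)]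
        congr 1
        field_simp
      have hsqrtq2 : Real.sqrt (2*π/((n:ℝ)*(c+ε)/2)) / D n = Real.sqrt (2*c/(c+ε)) := by
        rw [hDdef]
        simp only
        rw [← Real.sqrt_div (by positivity)]
        congr 1
        field_simp
      have hEexp : Real.exp (-(((n:ℝ)*(c+ε)/2)*δ^2)/2) = Real.exp (-((n:ℝ)*((c+ε)*δ^2/4))) := by
        congr 1
        ring
      have hdiv := (div_le_div_iff_of_pos_right hDpos).2 hPlb
      have hexpand : (Real.exp (-ε) * (Real.sqrt (π/((n:ℝ)*(c+ε)/2)) -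
          Real.exp (-(((n:ℝ)*(c+ε)/2)*δ^2)/2) * Real.sqrt (2*π/((n:ℝ)*(c+ε)/2)))) / D n =
          Real.exp (-ε) * Real.sqrt (c/(c+ε)) -
          Real.exp (-ε) * (Real.exp (-(((n:ℝ)*(c+ε)/2)*δ^2)/2) * Real.sqrt (2*c/(c+ε))) := by
        calc (Real.exp (-ε) * (Real.sqrt (π/((n:ℝ)*(c+ε)/2)) -
              Real.exp (-(((n:ℝ)*(c+ε)/2)*δ^2)/2) * Real.sqrt (2*π/((n:ℝ)*(c+ε)/2)))) / D n
            = Real.exp (-ε) * (Real.sqrt (π/((n:ℝ)*(c+ε)/2)) / D n) -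
              Real.exp (-ε) * (Real.exp (-(((n:ℝ)*(c+ε)/2)*δ^2)/2) *
                (Real.sqrt (2*π/((n:ℝ)*(c+ε)/2)) / D n)) := by
              ring
          _ = _ := by rw [hsqrtq, hsqrtq2]
      have hexp1 : Real.exp (-ε) ≤ 1 := Real.exp_le_one_iff.2 (by linarith)
      have hEnn : 0 ≤ Real.exp (-(((n:ℝ)*(c+ε)/2)*δ^2)/2) * Real.sqrt (2*c/(c+ε)) := by
        positivity
      have hfinal : Real.exp (-ε) * Real.sqrt (c/(c+ε)) -
          Real.exp (-(((n:ℝ)*(c+ε)/2)*δ^2)/2) * Real.sqrt (2*c/(c+ε)) ≤ P n / D n := by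
        rw [hexpand] at hdiv
        nlinarith [hdiv, hEnn, hexp1]
      have hsmall' : Real.exp (-(((n:ℝ)*(c+ε)/2)*δ^2)/2) * Real.sqrt (2*c/(c+ε)) < ε := by
        rw [hEexp, mul_comm]
        exact hsmall
      linarith
  -- final assembly
  rw [tendsto_order]
  constructor
  · intro l hl
    have h3 : ContinuousAt (fun e : ℝ => c/(c+e)) 0 :=
      ContinuousAt.div continuousAt_const (continuousAt_const.add continuousAt_id)
        (by simpa using hc.ne')
    have hcontG : ContinuousAt (fun e : ℝ => Real.exp (-e) * Real.sqrt (c/(c+e)) - e) 0 := by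
      have h2 : ContinuousAt (fun e : ℝ => Real.exp (-e)) 0 :=
        (Real.continuous_exp.comp continuous_neg).continuousAt
      have h4 : ContinuousAt (fun e : ℝ => Real.sqrt (c/(c+e))) 0 :=
        Real.continuous_sqrt.continuousAt.comp h3
      exact (h2.mul h4).sub continuousAt_id
    have ht : Tendsto (fun e : ℝ => Real.exp (-e) * Real.sqrt (c/(c+e)) - e)
        (nhds 0) (nhds 1) := by
      simpa [div_self hc.ne', Real.sqrt_one] using hcontG.tendsto
    have hev := ht.eventually_const_lt hl
    obtain ⟨r, hr, hrev⟩ := Metric.eventually_nhds_iff.1 hev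
    set ε := min (r/2) (c/2) with hεdef
    have hεpos : 0 < ε := lt_min (by linarith) (by linarith)
    have hεc : ε < c := lt_of_le_of_lt (min_le_right _ _) (by linarith)
    have hεr : dist ε (0:ℝ) < r := by
      rw [Real.dist_eq, sub_zero, abs_of_pos hεpos]
      calc ε ≤ r/2 := min_le_left _ _
        _ < r := by linarith
    have hlt := hrev hεr
    filter_upwards [(key ε hεpos hεc).2] with n hbnd
    linarith
  · intro u hu
    have h3 : ContinuousAt (fun e : ℝ => c/(c-e)) 0 :=
      ContinuousAt.div continuousAt_const (continuousAt_const.sub continuousAt_id)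
        (by simpa using hc.ne')
    have hcontG : ContinuousAt (fun e : ℝ => Real.exp e * Real.sqrt (c/(c-e)) + e) 0 := by
      have h2 : ContinuousAt (fun e : ℝ => Real.exp e) 0 := Real.continuous_exp.continuousAt
      have h4 : ContinuousAt (fun e : ℝ => Real.sqrt (c/(c-e))) 0 :=
        Real.continuous_sqrt.continuousAt.comp h3
      exact (h2.mul h4).add continuousAt_id
    have ht : Tendsto (fun e : ℝ => Real.exp e * Real.sqrt (c/(c-e)) + e)
        (nhds 0) (nhds 1) := by
      simpa [div_self hc.ne', Real.sqrt_one] using hcontG.tendsto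
    have hev := ht.eventually_lt_const hu
    obtain ⟨r, hr, hrev⟩ := Metric.eventually_nhds_iff.1 hev
    set ε := min (r/2) (c/2) with hεdef
    have hεpos : 0 < ε := lt_min (by linarith) (by linarith)
    have hεc : ε < c := lt_of_le_of_lt (min_le_right _ _) (by linarith)
    have hεr : dist ε (0:ℝ) < r := by
      rw [Real.dist_eq, sub_zero, abs_of_pos hεpos]
      calc ε ≤ r/2 := min_le_left _ _
        _ < r := by linarith
    have hlt := hrev hεr
    filter_upwards [(key ε hεpos hεc).1] with n hbnd
    linarith
end

section
/- Let σ_sc be the semicircle probability measure on ℝ with density (1/π)√(2 − t²) on [−√2, √2], and define Ψ*(x) = ∫ log|x − t| dσ_sc(t). Then Ψ*(x) = x²/2 − 1/2 − (1/2)log 2 for |x| ≤ √2, and Ψ*(x) = x²/2 − 1/2 − log 2 − (1/2)|x|√(x²−2) + log(|x| + √(x²−2)) for |x| > √2. -/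
open MeasureTheory

open Real Set intervalIntegral Filter Topology
open scoped ENNReal NNReal

noncomputable section

lemma integral_cos_rmul (r : ℝ) : ∫ θ in (0:ℝ)..π, Real.cos (r*θ) = if r = 0 then π else Real.sin (r*π)/r := by
  rcases eq_or_ne r 0 with h | h
  · simp [h]
  · rw [if_neg h, intervalIntegral.integral_comp_mul_left (fun x => Real.cos x) h]
    simp [mul_comm, div_eq_inv_mul]

lemma sin_sq_mul_cos_eq (r θ : ℝ) :
    Real.sin θ^2 * Real.cos (r*θ) =
      1/2*Real.cos (r*θ) - 1/4*Real.cos ((r+2)*θ) - 1/4*Real.cos ((r-2)*θ) := by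
  have h1 : Real.sin θ ^ 2 = 1/2 - Real.cos (2*θ)/2 := by
    have := Real.cos_two_mul θ
    have := Real.sin_sq_add_cos_sq θ
    nlinarith
  have h2 : 2 * Real.cos (2*θ) * Real.cos (r*θ) = Real.cos (2*θ - r*θ) + Real.cos (2*θ + r*θ) :=
    Real.two_mul_cos_mul_cos _ _
  have e1 : (r+2)*θ = 2*θ + r*θ := by ring
  have e2 : (r-2)*θ = -(2*θ - r*θ) := by ring
  rw [e1, e2, Real.cos_neg]
  linear_combination Real.cos (r*θ) * h1 - (1/4) * h2

lemma integral_sin_sq_cos (n : ℕ) (hn : n ≠ 0) :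
    ∫ θ in (0:ℝ)..π, Real.sin θ^2 * Real.cos (n*θ) = if n = 2 then -(π/4) else 0 := by
  have hc : ∀ c : ℝ, IntervalIntegrable (fun θ => Real.cos (c*θ)) volume 0 π :=
    fun c => (Real.continuous_cos.comp (continuous_const.mul continuous_id)).intervalIntegrable _ _
  have : (fun θ => Real.sin θ^2 * Real.cos ((n:ℝ)*θ)) =
      fun θ => 1/2*Real.cos ((n:ℝ)*θ) - 1/4*Real.cos (((n:ℝ)+2)*θ) - 1/4*Real.cos (((n:ℝ)-2)*θ) := by
    funext θ; exact sin_sq_mul_cos_eq _ _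
  rw [this]
  rw [intervalIntegral.integral_sub (((hc _).const_mul _).sub ((hc _).const_mul _)) ((hc _).const_mul _),
      intervalIntegral.integral_sub ((hc _).const_mul _) ((hc _).const_mul _),
      intervalIntegral.integral_const_mul, intervalIntegral.integral_const_mul,
      intervalIntegral.integral_const_mul, integral_cos_rmul, integral_cos_rmul, integral_cos_rmul]
  have hsin : ∀ m : ℤ, Real.sin (m * π) = 0 := fun m => Real.sin_int_mul_pi m
  rcases eq_or_ne n 2 with h2 | h2
  · subst h2
    push_cast
    rw [if_neg (by norm_num : (2:ℝ) ≠ 0), if_neg (by norm_num : (2:ℝ)+2 ≠ 0),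
        if_pos (by norm_num : (2:ℝ)-2 = 0)]
    have s1 : Real.sin (2*π) = 0 := by simpa using hsin 2
    have s2 : Real.sin ((2+2)*π) = 0 := by
      have h44 : ((2:ℝ)+2) = ((4:ℤ):ℝ) := by norm_num
      rw [h44, hsin 4]
    rw [s1, s2]; ring
  · have hn' : (n:ℝ) ≠ 0 := Nat.cast_ne_zero.mpr hn
    have hn2 : (n:ℝ) + 2 ≠ 0 := by positivity
    have hn3 : (n:ℝ) - 2 ≠ 0 := by
      intro h; apply h2; have : (n:ℝ) = 2 := by linarith
      exact_mod_cast this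
    rw [if_neg hn', if_neg hn2, if_neg hn3, if_neg h2]
    have s1 : Real.sin ((n:ℝ)*π) = 0 := by simpa using hsin n
    have s2 : Real.sin (((n:ℝ)+2)*π) = 0 := by
      have := hsin ((n:ℤ)+2); push_cast at this ⊢; linarith
    have s3 : Real.sin (((n:ℝ)-2)*π) = 0 := by
      have := hsin ((n:ℤ)-2); push_cast at this ⊢; linarith
    rw [s1, s2, s3]; ring

lemma integral_sin_sq' : ∫ θ in (0:ℝ)..π, Real.sin θ^2 = π/2 := by
  rw [integral_sin_sq]; simp

lemma hasSum_log_core (q α : ℝ) (hq : |q| < 1) :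
    HasSum (fun n : ℕ => -2 * (q^n * Real.cos (n*α) / n))
      (Real.log (1 - 2*q*Real.cos α + q^2)) := by
  set z : ℂ := (q:ℂ) * Complex.exp (α * Complex.I) with hz
  have hnorm : ‖z‖ < 1 := by
    rw [hz]
    simp [Complex.norm_exp, abs_of_nonneg]
    simpa using hq
  have h := Complex.hasSum_taylorSeries_neg_log hnorm
  have hre := h.mapL Complex.reCLM
  have hterm : ∀ n : ℕ, Complex.reCLM (z^n / n) = q^n * Real.cos (n*α) / n := by
    intro n
    have hzn : z^n = ((q^n : ℝ) : ℂ) * Complex.exp ((n*α : ℝ) * Complex.I) := by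
      rw [hz, mul_pow, ← Complex.exp_nat_mul]
      push_cast
      ring_nf
    simp only [Complex.reCLM_apply, hzn]
    rcases Nat.eq_zero_or_pos n with h0 | h0
    · subst h0; simp
    · rw [div_eq_mul_inv, div_eq_mul_inv]
      have : (n : ℂ)⁻¹ = ((n:ℝ)⁻¹ : ℝ) := by push_cast; ring
      rw [this]
      have he : (((q^n : ℝ):ℂ) * Complex.exp (((n*α : ℝ):ℂ) * Complex.I) * (((n:ℝ)⁻¹ : ℝ):ℂ)).re
          = q^n * (Complex.exp (((n*α : ℝ):ℂ) * Complex.I)).re * (n:ℝ)⁻¹ := by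
        simp [Complex.mul_re, Complex.ofReal_im, Complex.ofReal_re, ← Complex.ofReal_pow]
      rw [he, Complex.exp_ofReal_mul_I_re]
  have hval : Complex.reCLM (-Complex.log (1 - z)) =
      -(1/2) * Real.log (1 - 2*q*Real.cos α + q^2) := by
    have habs : ‖1 - z‖ ^ 2 = 1 - 2*q*Real.cos α + q^2 := by
      rw [Complex.sq_norm, Complex.normSq_apply, hz]
      have hexp : Complex.exp ((α:ℂ) * Complex.I) = ((Real.cos α : ℝ):ℂ) + ((Real.sin α : ℝ):ℂ) * Complex.I := by
        rw [Complex.exp_mul_I, Complex.ofReal_cos, Complex.ofReal_sin]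
      rw [hexp]
      simp [Complex.mul_re, Complex.mul_im, Complex.add_re, Complex.add_im,
        Complex.cos_ofReal_re, Complex.sin_ofReal_re]
      nlinarith [Real.sin_sq_add_cos_sq α]
    simp only [Complex.reCLM_apply, Complex.neg_re, Complex.log_re]
    rw [← habs, Real.log_pow]
    push_cast; ring
  rw [hval] at hre
  have h2 := hre.mul_left (-2)
  have : -2 * (-(1/2) * Real.log (1 - 2*q*Real.cos α + q^2)) = Real.log (1 - 2*q*Real.cos α + q^2) := by ring
  rw [this] at h2
  exact h2.congr_fun (fun n => by rw [hterm n])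

lemma intervalIntegrable_log_all (a b : ℝ) : IntervalIntegrable Real.log volume a b := by
  have key : ∀ c : ℝ, 0 ≤ c → IntervalIntegrable Real.log volume 0 c := by
    intro c hc
    rcases eq_or_lt_of_le hc with rfl | hc
    · simp
    rw [intervalIntegrable_iff_integrableOn_Ioc_of_le hc.le]
    have hbound : ∀ u ∈ Ioc (0:ℝ) c, ‖Real.log u‖ ≤ 4 * u ^ (-(1/4) : ℝ) + |Real.log c| := by
      intro u hu
      have hu0 : 0 < u := hu.1
      rcases le_or_gt u 1 with h1 | h1
      · have hy : (0:ℝ) < u ^ ((1/4) : ℝ) := Real.rpow_pos_of_pos hu0 _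
        have hlogy : Real.log (u ^ ((1/4):ℝ)) = (1/4) * Real.log u := Real.log_rpow hu0 _
        have hinv : Real.log (u ^ ((1/4):ℝ))⁻¹ ≤ (u ^ ((1/4):ℝ))⁻¹ - 1 :=
          Real.log_le_sub_one_of_pos (by positivity)
        rw [Real.log_inv] at hinv
        have hneg : Real.log u ≤ 0 := Real.log_nonpos hu0.le h1
        have hinv2 : (u ^ ((1/4):ℝ))⁻¹ = u ^ (-(1/4) : ℝ) := by
          rw [Real.rpow_neg hu0.le]
        rw [Real.norm_eq_abs, abs_of_nonpos hneg]
        have : -Real.log u ≤ 4 * (u ^ (-(1/4):ℝ)) := by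
          rw [← hinv2]
          nlinarith [hlogy, hinv, inv_pos.mpr hy]
        have : (0:ℝ) ≤ |Real.log c| := abs_nonneg _
        linarith [‹-Real.log u ≤ 4 * (u ^ (-(1/4):ℝ))›]
      · have hpos : 0 ≤ Real.log u := Real.log_nonneg h1.le
        have : Real.log u ≤ Real.log c := Real.log_le_log hu0 hu.2
        have h4 : (0:ℝ) ≤ 4 * u ^ (-(1/4):ℝ) := by positivity
        rw [Real.norm_eq_abs, abs_of_nonneg hpos]
        have : Real.log c ≤ |Real.log c| := le_abs_self _
        linarith [‹Real.log u ≤ Real.log c›]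
    have hbint : IntegrableOn (fun u => 4 * u ^ (-(1/4) : ℝ) + |Real.log c|) (Ioc 0 c) := by
      have h1 : IntervalIntegrable (fun u : ℝ => u ^ (-(1/4) : ℝ)) volume 0 c :=
        intervalIntegral.intervalIntegrable_rpow' (by norm_num)
      have := (h1.const_mul 4).add (intervalIntegrable_const (c := |Real.log c|))
      rwa [intervalIntegrable_iff_integrableOn_Ioc_of_le hc.le] at this
    exact Integrable.mono hbint Real.measurable_log.aestronglyMeasurable
      ((ae_restrict_iff' measurableSet_Ioc).mpr (Filter.Eventually.of_forall
        (fun u hu => (hbound u hu).trans (le_abs_self _))))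
  have key' : ∀ c : ℝ, IntervalIntegrable Real.log volume 0 c := by
    intro c
    rcases le_or_gt 0 c with h | h
    · exact key c h
    · rw [IntervalIntegrable.iff_comp_neg]
      have : (fun x : ℝ => Real.log (-x)) = Real.log := by
        funext x; rw [Real.log_neg_eq_log]
      rw [this]
      simpa using key (-c) (by linarith)
  exact (key' a).symm.trans (key' b)

lemma one_sub_cos_ge {u : ℝ} (h : |u| ≤ π) : 2 * u^2 / π^2 ≤ 1 - Real.cos u := by
  have hmain : ∀ v : ℝ, 0 ≤ v → v ≤ π → 2 * v^2 / π^2 ≤ 1 - Real.cos v := by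
    intro v hv0 hvπ
    have hs : Real.sin (v/2) ^ 2 = (1 - Real.cos v) / 2 := by
      have hcs := Real.cos_sq (v/2)
      rw [show 2*(v/2) = v by ring] at hcs
      have := Real.sin_sq_add_cos_sq (v/2)
      nlinarith
    have hj : 2/π * (v/2) ≤ Real.sin (v/2) :=
      Real.mul_le_sin (by linarith) (by linarith)
    have hππ : (0:ℝ) < π := Real.pi_pos
    have h2 : v/π ≤ Real.sin (v/2) := by
      have : 2/π * (v/2) = v/π := by field_simp; try ring
      linarith [this ▸ hj]
    have h3 : (v/π)^2 ≤ Real.sin (v/2)^2 := by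
      have hvp : 0 ≤ v/π := by positivity
      nlinarith
    have h4 : 2*v^2/π^2 = 2*(v/π)^2 := by field_simp; try ring
    linarith [hs, h3, h4]
  rcases le_or_gt 0 u with hu | hu
  · exact hmain u hu (by rwa [abs_of_nonneg hu] at h)
  · have := hmain (-u) (by linarith) (by rwa [abs_of_neg hu] at h)
    simpa [Real.cos_neg, neg_sq] using this

lemma II1 : IntervalIntegrable (fun u => Real.log (1 - Real.cos u)) volume (-π) π := by
  have hπ : (0:ℝ) < π := Real.pi_pos
  rw [intervalIntegrable_iff_integrableOn_Ioc_of_le (by linarith)]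
  have hbound : ∀ u ∈ Ioc (-π) π, ‖Real.log (1 - Real.cos u)‖ ≤
      2*Real.log 2 + 2*Real.log π + 2*|Real.log u| := by
    intro u hu
    have habs : |u| ≤ π := abs_le.mpr ⟨hu.1.le, hu.2⟩
    have hlo : 2 * u^2 / π^2 ≤ 1 - Real.cos u := one_sub_cos_ge habs
    have hhi : 1 - Real.cos u ≤ 2 := by nlinarith [Real.neg_one_le_cos u]
    have hlog2 : (0:ℝ) ≤ Real.log 2 := Real.log_nonneg (by norm_num)
    have hlogπ : (0:ℝ) ≤ Real.log π := Real.log_nonneg (by linarith [Real.pi_gt_three])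
    rcases eq_or_ne u 0 with rfl | hu0
    · simp [Real.log_abs]
      positivity
    · have hupos : 0 < u^2 := by positivity
      have hlopos : 0 < 2 * u^2 / π^2 := by positivity
      have hA : 0 < 1 - Real.cos u := lt_of_lt_of_le hlopos hlo
      have h1 : Real.log (2 * u^2/π^2) ≤ Real.log (1 - Real.cos u) := Real.log_le_log hlopos hlo
      have h2 : Real.log (1 - Real.cos u) ≤ Real.log 2 := Real.log_le_log hA hhi
      have hexp : Real.log (2 * u^2/π^2) = Real.log 2 + 2*Real.log u - 2*Real.log π := by
        rw [Real.log_div (by positivity) (by positivity), Real.log_mul (by norm_num) (by positivity),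
            Real.log_pow, Real.log_pow]
        push_cast; ring
      rw [Real.norm_eq_abs, abs_le]
      constructor
      · have : -(2*Real.log 2 + 2*Real.log π + 2*|Real.log u|) ≤ Real.log 2 + 2*Real.log u - 2*Real.log π := by
          have := neg_abs_le (Real.log u)
          linarith
        linarith [hexp ▸ h1]
      · linarith [abs_nonneg (Real.log u)]
  have hbint : IntegrableOn (fun u => 2*Real.log 2 + 2*Real.log π + 2*|Real.log u|) (Ioc (-π) π) := by
    have h1 : IntervalIntegrable (fun u : ℝ => |Real.log u|) volume (-π) π :=
      (intervalIntegrable_log_all _ _).abs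
    have := (intervalIntegrable_const (μ := volume) (a := -π) (b := π)
      (c := 2*Real.log 2 + 2*Real.log π)).add (h1.const_mul 2)
    rwa [intervalIntegrable_iff_integrableOn_Ioc_of_le (by linarith)] at this
  refine Integrable.mono hbint ?_ ((ae_restrict_iff' measurableSet_Ioc).mpr (Filter.Eventually.of_forall
    (fun u hu => (hbound u hu).trans (le_abs_self _))))
  exact (Real.measurable_log.comp (by fun_prop : Measurable fun u : ℝ => 1 - Real.cos u)).aestronglyMeasurable

lemma II2 : IntervalIntegrable (fun u => Real.log (1 - Real.cos u)) volume 0 (2*π) := by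
  have hπ : (0:ℝ) < π := Real.pi_pos
  have p1 : IntervalIntegrable (fun u => Real.log (1 - Real.cos u)) volume 0 π :=
    II1.mono_set (by rw [uIcc_of_le hπ.le, uIcc_of_le (by linarith)]; exact Icc_subset_Icc (by linarith) le_rfl)
  have p2' : IntervalIntegrable (fun x => Real.log (1 - Real.cos (2*π - x))) volume (2*π - -π) (2*π - π) :=
    II1.comp_sub_left (2*π)
  have heq : (fun x => Real.log (1 - Real.cos (2*π - x))) = fun u => Real.log (1 - Real.cos u) := by
    funext x
    rw [Real.cos_sub]
    simp [Real.cos_two_pi, Real.sin_two_pi]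
  rw [heq] at p2'
  have p2 : IntervalIntegrable (fun u => Real.log (1 - Real.cos u)) volume π (2*π) :=
    p2'.mono_set (by
      rw [uIcc_of_le (by linarith : π ≤ 2*π), uIcc_of_ge (by linarith : 2*π - π ≤ 2*π - -π)]
      exact Icc_subset_Icc (by linarith) (by linarith))
  exact p1.trans p2

lemma master (q φ : ℝ) (hq : |q| < 1) :
    (∫ θ in (0:ℝ)..π, Real.sin θ^2 *
      (Real.log (1 - 2*q*Real.cos (θ-φ) + q^2) + Real.log (1 - 2*q*Real.cos (θ+φ) + q^2)))
    = π * q^2 * Real.cos (2*φ) / 2 := by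
  set F : ℕ → ℝ → ℝ :=
    fun n θ => (-4) * (q^n / n) * Real.cos (n*φ) * (Real.sin θ^2 * Real.cos (n*θ)) with hF
  have hsum : ∀ θ : ℝ, HasSum (fun n => F n θ)
      (Real.sin θ^2 * (Real.log (1 - 2*q*Real.cos (θ-φ) + q^2)
        + Real.log (1 - 2*q*Real.cos (θ+φ) + q^2))) := by
    intro θ
    have h1 := hasSum_log_core q (θ-φ) hq
    have h2 := hasSum_log_core q (θ+φ) hq
    have hadd := (h1.add h2).mul_left (Real.sin θ^2)
    refine hadd.congr_fun fun n => ?_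
    have hcc := Real.two_mul_cos_mul_cos ((n:ℝ)*θ) ((n:ℝ)*φ)
    have e1 : (n:ℝ)*(θ-φ) = (n:ℝ)*θ - (n:ℝ)*φ := by ring
    have e2 : (n:ℝ)*(θ+φ) = (n:ℝ)*θ + (n:ℝ)*φ := by ring
    rw [hF]
    simp only [e1, e2]
    linear_combination (-2 * Real.sin θ^2 * q^n / n) * hcc
  have hFmeas : ∀ n : ℕ, AEStronglyMeasurable (F n) (volume.restrict (Ioc 0 π)) := by
    intro n
    exact ((continuous_const.mul ((Real.continuous_sin.pow 2).mul
      (Real.continuous_cos.comp (continuous_const.mul continuous_id)))).aestronglyMeasurable)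
  have hFbd : ∀ (n : ℕ) (θ : ℝ), ‖F n θ‖ ≤ 4 * |q|^n := by
    intro n θ
    rcases Nat.eq_zero_or_pos n with rfl | hn
    · simp [hF]
    · have h0 : ‖F n θ‖ = 4 * (|q ^ n / (n:ℝ)| * (|Real.cos ((n:ℝ)*φ)| *
          |Real.sin θ ^ 2 * Real.cos ((n:ℝ)*θ)|)) := by
        rw [hF, Real.norm_eq_abs, abs_mul, abs_mul, abs_mul]
        norm_num; ring
      rw [h0]
      have ha : |q ^ n / (n:ℝ)| ≤ |q|^n := by
        rw [abs_div, abs_pow]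
        refine div_le_self (by positivity) ?_
        rw [Nat.abs_cast]; exact_mod_cast hn
      have hb : |Real.cos ((n:ℝ)*φ)| ≤ 1 := Real.abs_cos_le_one _
      have hc : |Real.sin θ ^ 2 * Real.cos ((n:ℝ)*θ)| ≤ 1 := by
        rw [abs_mul, abs_pow]
        have h1 : |Real.sin θ| ^ 2 ≤ 1 := by
          nlinarith [Real.abs_sin_le_one θ, abs_nonneg (Real.sin θ)]
        nlinarith [Real.abs_cos_le_one ((n:ℝ)*θ), abs_nonneg (Real.cos ((n:ℝ)*θ)),
          sq_nonneg (|Real.sin θ|)]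
      have hq1 : (0:ℝ) ≤ |q|^n := pow_nonneg (abs_nonneg q) n
      have hbc : |Real.cos ((n:ℝ)*φ)| * |Real.sin θ ^ 2 * Real.cos ((n:ℝ)*θ)| ≤ 1 := by
        nlinarith [abs_nonneg (Real.cos ((n:ℝ)*φ)), abs_nonneg (Real.sin θ ^ 2 * Real.cos ((n:ℝ)*θ))]
      calc 4 * (|q ^ n / (n:ℝ)| * (|Real.cos ((n:ℝ)*φ)| * |Real.sin θ ^ 2 * Real.cos ((n:ℝ)*θ)|))
          ≤ 4 * (|q|^n * 1) := by
            refine mul_le_mul_of_nonneg_left ?_ (by norm_num)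
            exact mul_le_mul ha hbc (by positivity) hq1
        _ = 4 * |q|^n := by ring
  have hlint : ∀ n : ℕ, (∫⁻ θ in Ioc (0:ℝ) π, ‖F n θ‖₊) ≤
      (ENNReal.ofReal (4*π)) * (ENNReal.ofReal |q|)^n := by
    intro n
    calc (∫⁻ θ in Ioc (0:ℝ) π, ‖F n θ‖₊)
        ≤ ∫⁻ _ in Ioc (0:ℝ) π, ENNReal.ofReal (4 * |q|^n) := by
          refine lintegral_mono fun θ => ?_
          rw [← ENNReal.ofReal_coe_nnreal, coe_nnnorm]
          exact ENNReal.ofReal_le_ofReal (hFbd n θ)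
      _ = ENNReal.ofReal (4 * |q|^n) * volume (Ioc (0:ℝ) π) := by
          rw [MeasureTheory.lintegral_const, Measure.restrict_apply MeasurableSet.univ, Set.univ_inter]
      _ = (ENNReal.ofReal (4*π)) * (ENNReal.ofReal |q|)^n := by
          rw [Real.volume_Ioc, ENNReal.ofReal_mul (by norm_num), ENNReal.ofReal_mul (by norm_num),
            ENNReal.ofReal_pow (abs_nonneg q)]
          rw [sub_zero]
          ring
  have hf' : (∑' n : ℕ, ∫⁻ θ in Ioc (0:ℝ) π, ‖F n θ‖₊) ≠ ⊤ := by
    refine ne_top_of_le_ne_top ?_ (ENNReal.tsum_le_tsum hlint)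
    rw [ENNReal.tsum_mul_left, ENNReal.tsum_geometric]
    refine ENNReal.mul_ne_top ENNReal.ofReal_ne_top (ENNReal.inv_ne_top.mpr ?_)
    rw [ne_eq, tsub_eq_zero_iff_le, not_le]
    exact ENNReal.ofReal_lt_one.mpr hq
  rw [intervalIntegral.integral_of_le Real.pi_pos.le]
  have hrw : (∫ θ in Ioc (0:ℝ) π, Real.sin θ^2 *
      (Real.log (1 - 2*q*Real.cos (θ-φ) + q^2) + Real.log (1 - 2*q*Real.cos (θ+φ) + q^2)))
      = ∫ θ in Ioc (0:ℝ) π, ∑' n : ℕ, F n θ :=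
    integral_congr_ae (Filter.Eventually.of_forall fun θ => ((hsum θ).tsum_eq).symm)
  rw [hrw, MeasureTheory.integral_tsum hFmeas hf']
  have hint : ∀ n : ℕ, (∫ θ in Ioc (0:ℝ) π, F n θ) = if n = 2 then π*q^2*Real.cos (2*φ)/2 else 0 := by
    intro n
    rw [← intervalIntegral.integral_of_le Real.pi_pos.le]
    rcases eq_or_ne n 0 with rfl | h0
    · simp [hF]
    have : (∫ θ in (0:ℝ)..π, F n θ) =
        ((-4) * (q^n / n) * Real.cos (n*φ)) * ∫ θ in (0:ℝ)..π, Real.sin θ^2 * Real.cos (n*θ) := by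
      rw [hF, intervalIntegral.integral_const_mul]
    rw [this, integral_sin_sq_cos n h0]
    rcases eq_or_ne n 2 with rfl | h2
    · rw [if_pos rfl, if_pos rfl]; push_cast; ring
    · rw [if_neg h2, if_neg h2, mul_zero]
  rw [tsum_eq_single 2 (fun n hn => by rw [hint n, if_neg hn]), hint 2, if_pos rfl]

lemma K2 {φ : ℝ} (h0 : 0 ≤ φ) (h1 : φ ≤ π) :
    IntervalIntegrable (fun θ => Real.log (1 - Real.cos (θ - φ))) volume 0 π := by
  have := II1.comp_sub_right φ
  refine this.mono_set ?_
  rw [uIcc_of_le Real.pi_pos.le, uIcc_of_le (by linarith)]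
  exact Icc_subset_Icc (by linarith) (by linarith)

lemma K1 {φ : ℝ} (h0 : 0 ≤ φ) (h1 : φ ≤ π) :
    IntervalIntegrable (fun θ => Real.log (1 - Real.cos (θ + φ))) volume 0 π := by
  have := II2.comp_add_right φ
  refine this.mono_set ?_
  rw [uIcc_of_le Real.pi_pos.le, uIcc_of_le (by linarith [Real.pi_pos])]
  exact Icc_subset_Icc (by linarith) (by linarith)

lemma integral_sin_sq'' : ∫ θ in (0:ℝ)..π, Real.sin θ^2 = π/2 := by
  rw [integral_sin_sq]; simp

lemma limit_lemma (φ : ℝ) (hφ0 : 0 ≤ φ) (hφπ : φ ≤ π) :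
    (∫ θ in (0:ℝ)..π, Real.sin θ^2 *
       (Real.log (1 - Real.cos (θ-φ)) + Real.log (1 - Real.cos (θ+φ))))
    = π * Real.cos (2*φ) / 2 - π * Real.log 2 := by
  have hπ := Real.pi_pos
  set μ := volume.restrict (Ioc (0:ℝ) π) with hμ
  set G : ℝ → ℝ → ℝ := fun q θ => Real.sin θ^2 *
      (Real.log (1 - 2*q*Real.cos (θ-φ) + q^2) + Real.log (1 - 2*q*Real.cos (θ+φ) + q^2)) with hG
  set T : ℝ → ℝ := fun θ => Real.sin θ^2 *
      (Real.log (2 - 2*Real.cos (θ-φ)) + Real.log (2 - 2*Real.cos (θ+φ))) with hT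
  -- a.e. good points
  have hne : ∀ c : ℝ, ∀ᵐ θ ∂μ, θ ≠ c := by
    intro c
    refine ae_restrict_of_ae ?_
    refine ae_iff.mpr ?_
    have : {θ : ℝ | ¬θ ≠ c} = {c} := by ext θ; simp
    rw [this]
    exact Real.volume_singleton
  have hgood : ∀ᵐ θ ∂μ, θ ∈ Ioc (0:ℝ) π ∧ θ ≠ φ ∧ θ ≠ 2*π - φ := by
    filter_upwards [ae_restrict_mem measurableSet_Ioc, hne φ, hne (2*π - φ)] with θ h1 h2 h3
    exact ⟨h1, h2, h3⟩
  have hcosne : ∀ θ : ℝ, θ ∈ Ioc (0:ℝ) π → θ ≠ φ → θ ≠ 2*π - φ →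
      Real.cos (θ - φ) ≠ 1 ∧ Real.cos (θ + φ) ≠ 1 := by
    intro θ hθ hθφ hθ2
    constructor
    · intro hc
      have := (Real.cos_eq_one_iff_of_lt_of_lt (by linarith [hθ.1, hθ.2] : -(2*π) < θ - φ)
        (by linarith [hθ.2] : θ - φ < 2*π)).mp hc
      exact hθφ (by linarith)
    · intro hc
      have h2π : θ + φ < 2*π := by
        rcases lt_or_eq_of_le hθ.2 with h | h
        · linarith
        · rcases lt_or_eq_of_le hφπ with h' | h'
          · linarith
          · exact (hθ2 (by rw [h, h']; ring)).elim
      have := (Real.cos_eq_one_iff_of_lt_of_lt (by linarith [hθ.1] : -(2*π) < θ + φ) h2π).mp hc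
      linarith [hθ.1]
  have hGmeas : ∀ q : ℝ, AEStronglyMeasurable (G q) μ := by
    intro q
    have h1 : Measurable fun θ => Real.log (1 - 2*q*Real.cos (θ-φ) + q^2) :=
      Real.measurable_log.comp (by fun_prop)
    have h2 : Measurable fun θ => Real.log (1 - 2*q*Real.cos (θ+φ) + q^2) :=
      Real.measurable_log.comp (by fun_prop)
    exact ((Real.measurable_sin.pow_const 2).mul (h1.add h2)).aestronglyMeasurable
  set bound : ℝ → ℝ := fun θ => 2*Real.log 5 +
      (|Real.log (1 - Real.cos (θ-φ))| + |Real.log (1 - Real.cos (θ+φ))|) with hbd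
  have bound_int : Integrable bound μ := by
    have hbi : IntervalIntegrable bound volume 0 π := by
      exact (intervalIntegrable_const (c := 2*Real.log 5)).add
        (((K2 hφ0 hφπ).abs).add ((K1 hφ0 hφπ).abs))
    rwa [intervalIntegrable_iff_integrableOn_Ioc_of_le hπ.le] at hbi
  have key : ∀ q : ℝ, q ∈ Ico (1/2 : ℝ) 1 → ∀ v : ℝ, Real.cos v ≠ 1 →
      |Real.log (1 - 2*q*Real.cos v + q^2)| ≤ Real.log 5 + |Real.log (1 - Real.cos v)| := by
    intro q hq v hv
    have hcl : Real.cos v ≤ 1 := Real.cos_le_one v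
    have hc0 : 0 < 1 - Real.cos v := lt_of_le_of_ne (by linarith) (by intro h; apply hv; linarith)
    have hlow : 1 - Real.cos v ≤ 1 - 2*q*Real.cos v + q^2 := by
      nlinarith [sq_nonneg (q-1), mul_nonneg (by linarith [hq.1] : (0:ℝ) ≤ 2*q-1) (by linarith : (0:ℝ) ≤ 1 - Real.cos v)]
    have hhigh : 1 - 2*q*Real.cos v + q^2 ≤ 5 := by
      nlinarith [Real.neg_one_le_cos v, hq.1, hq.2]
    have hXpos : 0 < 1 - 2*q*Real.cos v + q^2 := lt_of_lt_of_le hc0 hlow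
    have l1 : Real.log (1 - Real.cos v) ≤ Real.log (1 - 2*q*Real.cos v + q^2) :=
      Real.log_le_log hc0 hlow
    have l2 : Real.log (1 - 2*q*Real.cos v + q^2) ≤ Real.log 5 :=
      Real.log_le_log hXpos hhigh
    have hl5 : (0:ℝ) ≤ Real.log 5 := Real.log_nonneg (by norm_num)
    rw [abs_le]
    constructor
    · have := neg_abs_le (Real.log (1 - Real.cos v)); linarith
    · linarith [abs_nonneg (Real.log (1 - Real.cos v))]
  have h_bound : ∀ᶠ q in 𝓝[<] (1:ℝ), ∀ᵐ θ ∂μ, ‖G q θ‖ ≤ bound θ := by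
    filter_upwards [Ico_mem_nhdsLT_of_mem (show (1:ℝ) ∈ Ioc (1/2) 1 by constructor <;> norm_num)]
      with q hq
    filter_upwards [hgood] with θ hθ
    obtain ⟨hmem, h1, h2⟩ := hθ
    obtain ⟨hc1, hc2⟩ := hcosne θ hmem h1 h2
    have b1 := key q hq _ hc1
    have b2 := key q hq _ hc2
    rw [hG, Real.norm_eq_abs, abs_mul]
    have hsin : |Real.sin θ^2| ≤ 1 := by
      rw [abs_pow]
      nlinarith [Real.abs_sin_le_one θ, abs_nonneg (Real.sin θ)]
    have habs := abs_add_le (Real.log (1 - 2*q*Real.cos (θ-φ) + q^2))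
      (Real.log (1 - 2*q*Real.cos (θ+φ) + q^2))
    have hm : |Real.sin θ^2| * |Real.log (1 - 2*q*Real.cos (θ-φ) + q^2) +
        Real.log (1 - 2*q*Real.cos (θ+φ) + q^2)| ≤
        |Real.log (1 - 2*q*Real.cos (θ-φ) + q^2) + Real.log (1 - 2*q*Real.cos (θ+φ) + q^2)| :=
      mul_le_of_le_one_left (abs_nonneg _) hsin
    rw [hbd]
    dsimp only
    linarith
  have tends : ∀ v : ℝ, Real.cos v ≠ 1 →
      Tendsto (fun q : ℝ => Real.log (1 - 2*q*Real.cos v + q^2)) (𝓝[<] (1:ℝ))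
        (𝓝 (Real.log (2 - 2*Real.cos v))) := by
    intro v hv
    have hcont : Tendsto (fun q : ℝ => 1 - 2*q*Real.cos v + q^2) (𝓝 (1:ℝ))
        (𝓝 (2 - 2*Real.cos v)) := by
      have hc : Continuous fun q : ℝ => 1 - 2*q*Real.cos v + q^2 := by fun_prop
      have h := hc.tendsto 1
      have : 1 - 2*1*Real.cos v + (1:ℝ)^2 = 2 - 2*Real.cos v := by ring
      rwa [this] at h
    have hne0 : 2 - 2*Real.cos v ≠ 0 := by intro h; apply hv; linarith
    exact ((Real.continuousAt_log hne0).tendsto.comp hcont).mono_left nhdsWithin_le_nhds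
  have h_lim : ∀ᵐ θ ∂μ, Tendsto (fun q => G q θ) (𝓝[<] (1:ℝ)) (𝓝 (T θ)) := by
    filter_upwards [hgood] with θ hθ
    obtain ⟨hmem, h1, h2⟩ := hθ
    obtain ⟨hc1, hc2⟩ := hcosne θ hmem h1 h2
    exact ((tends _ hc1).add (tends _ hc2)).const_mul (Real.sin θ^2)
  have hDCT := MeasureTheory.tendsto_integral_filter_of_dominated_convergence bound
    (Filter.Eventually.of_forall hGmeas) h_bound bound_int h_lim
  have hval : Tendsto (fun q : ℝ => ∫ θ, G q θ ∂μ) (𝓝[<] (1:ℝ))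
      (𝓝 (π * Real.cos (2*φ)/2)) := by
    have heq : (fun q : ℝ => π * q^2 * Real.cos (2*φ)/2) =ᶠ[nhdsWithin (1:ℝ) (Iio 1)]
        (fun q : ℝ => ∫ θ, G q θ ∂μ) := by
      filter_upwards [Ioo_mem_nhdsLT_of_mem
        (show (1:ℝ) ∈ Ioc (-1) 1 by constructor <;> norm_num)] with q hq
      have habs : |q| < 1 := abs_lt.mpr ⟨hq.1, hq.2⟩
      have := master q φ habs
      rw [intervalIntegral.integral_of_le hπ.le] at this
      rw [← this]
    have hv : Tendsto (fun q : ℝ => π * q^2 * Real.cos (2*φ)/2) (𝓝[<] (1:ℝ))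
        (𝓝 (π * Real.cos (2*φ)/2)) := by
      have hc : Continuous fun q : ℝ => π * q^2 * Real.cos (2*φ)/2 := by fun_prop
      have h := (hc.tendsto 1).mono_left (nhdsWithin_le_nhds (s := Iio (1:ℝ)))
      have he : π * (1:ℝ)^2 * Real.cos (2*φ)/2 = π * Real.cos (2*φ)/2 := by ring
      rwa [he] at h
    exact Tendsto.congr' heq hv
  have hTint : (∫ θ, T θ ∂μ) = π * Real.cos (2*φ)/2 := tendsto_nhds_unique hDCT hval
  -- split ∫ T
  have hsplit : (∫ θ, T θ ∂μ) = (∫ θ, (Real.sin θ^2 *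
      (Real.log (1 - Real.cos (θ-φ)) + Real.log (1 - Real.cos (θ+φ)))) ∂μ)
      + ∫ θ, (Real.sin θ^2 * (2*Real.log 2)) ∂μ := by
    have hae : ∀ᵐ θ ∂μ, T θ = (Real.sin θ^2 *
        (Real.log (1 - Real.cos (θ-φ)) + Real.log (1 - Real.cos (θ+φ))))
        + Real.sin θ^2 * (2*Real.log 2) := by
      filter_upwards [hgood] with θ hθ
      obtain ⟨hmem, h1, h2⟩ := hθ
      obtain ⟨hc1, hc2⟩ := hcosne θ hmem h1 h2
      have e1 : 2 - 2*Real.cos (θ-φ) = 2 * (1 - Real.cos (θ-φ)) := by ring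
      have e2 : 2 - 2*Real.cos (θ+φ) = 2 * (1 - Real.cos (θ+φ)) := by ring
      rw [hT]
      dsimp only
      rw [e1, e2, Real.log_mul two_ne_zero (by intro h; apply hc1; linarith),
        Real.log_mul two_ne_zero (by intro h; apply hc2; linarith)]
      ring
    rw [integral_congr_ae hae]
    have hint1 : Integrable (fun θ => Real.sin θ^2 *
        (Real.log (1 - Real.cos (θ-φ)) + Real.log (1 - Real.cos (θ+φ)))) μ := by
      have h := (((K2 hφ0 hφπ).add (K1 hφ0 hφπ)).continuousOn_mul
        ((Real.continuous_sin.pow 2).continuousOn) : IntervalIntegrable _ volume 0 π)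
      rw [intervalIntegrable_iff_integrableOn_Ioc_of_le hπ.le] at h
      refine h.congr_fun ?_ measurableSet_Ioc
      intro θ _; simp only [Pi.pow_apply]
    have hint2 : Integrable (fun θ => Real.sin θ^2 * (2*Real.log 2)) μ := by
      have h : IntervalIntegrable (fun θ => Real.sin θ^2 * (2*Real.log 2)) volume 0 π :=
        (Continuous.intervalIntegrable (by fun_prop) _ _)
      rwa [intervalIntegrable_iff_integrableOn_Ioc_of_le hπ.le] at h
    exact integral_add hint1 hint2
  have hc2 : (∫ θ, (Real.sin θ^2 * (2*Real.log 2)) ∂μ) = π * Real.log 2 := by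
    rw [hμ, ← intervalIntegral.integral_of_le hπ.le, intervalIntegral.integral_mul_const,
      integral_sin_sq'']
    ring
  rw [intervalIntegral.integral_of_le hπ.le]
  have : (∫ θ, T θ ∂μ) = (∫ θ in Ioc (0:ℝ) π, (Real.sin θ^2 *
      (Real.log (1 - Real.cos (θ-φ)) + Real.log (1 - Real.cos (θ+φ))))) + π * Real.log 2 := by
    rw [hsplit, hc2]
  linarith [hTint, this]

/-- The semicircle probability measure of radius `√2`
(density `(1/π)√(2−t²)` on `[−√2, √2]`). -/
noncomputable def sigmaSc : Measure ℝ :=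
  (volume.restrict (Set.Icc (-Real.sqrt 2) (Real.sqrt 2))).withDensity
    (fun t => ENNReal.ofReal ((1 / Real.pi) * Real.sqrt (2 - t ^ 2)))

/-- The logarithmic potential of the semicircle law. -/
noncomputable def PsiStar (x : ℝ) : ℝ := ∫ t, Real.log |x - t| ∂sigmaSc

lemma psiStar_rep (x : ℝ) : PsiStar x =
    (2/π) * ∫ θ in (0:ℝ)..π, Real.sin θ^2 * Real.log |x - Real.sqrt 2 * Real.cos θ| := by
  have hπ := Real.pi_pos
  have hr2 : (0:ℝ) < Real.sqrt 2 := Real.sqrt_pos.mpr two_pos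
  have hsq2 : Real.sqrt 2 ^ 2 = 2 := Real.sq_sqrt (by norm_num)
  -- unfold withDensity
  have h1 : PsiStar x = ∫ t in Icc (-Real.sqrt 2) (Real.sqrt 2),
      ((1 / π) * Real.sqrt (2 - t ^ 2)) * Real.log |x - t| := by
    rw [PsiStar, sigmaSc]
    rw [show (fun t : ℝ => ENNReal.ofReal ((1 / Real.pi) * Real.sqrt (2 - t ^ 2)))
        = (fun t : ℝ => (((1 / Real.pi) * Real.sqrt (2 - t ^ 2)).toNNReal : ℝ≥0∞)) from rfl]
    rw [integral_withDensity_eq_integral_smul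
      (by fun_prop : Measurable fun t : ℝ => ((1 / Real.pi) * Real.sqrt (2 - t ^ 2)).toNNReal)]
    refine integral_congr_ae (Filter.Eventually.of_forall fun t => ?_)
    have hnn : 0 ≤ (1 / π) * Real.sqrt (2 - t ^ 2) := by positivity
    simp only [NNReal.smul_def, Real.coe_toNNReal _ hnn, smul_eq_mul]
  -- Icc to Ioo
  have h2 : PsiStar x = ∫ t in Ioo (-Real.sqrt 2) (Real.sqrt 2),
      ((1 / π) * Real.sqrt (2 - t ^ 2)) * Real.log |x - t| := by
    rw [h1, integral_Icc_eq_integral_Ioo]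
  -- substitution
  set g : ℝ → ℝ := fun t => ((1 / π) * Real.sqrt (2 - t ^ 2)) * Real.log |x - t| with hg
  set f : ℝ → ℝ := fun θ => Real.sqrt 2 * Real.cos θ with hf
  have himg : f '' Ioo 0 π = Ioo (-Real.sqrt 2) (Real.sqrt 2) := by
    ext t
    constructor
    · rintro ⟨θ, hθ, rfl⟩
      have hc1 : Real.cos θ < 1 := by
        have := Real.strictAntiOn_cos (left_mem_Icc.mpr hπ.le)
          ⟨hθ.1.le, hθ.2.le⟩ hθ.1
        simpa using this
      have hc2 : -1 < Real.cos θ := by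
        have := Real.strictAntiOn_cos ⟨hθ.1.le, hθ.2.le⟩ (right_mem_Icc.mpr hπ.le) hθ.2
        simpa using this
      constructor
      · rw [hf]; dsimp only; nlinarith
      · rw [hf]; dsimp only; nlinarith
    · intro ht
      have hm1 : -1 ≤ t / Real.sqrt 2 := by
        rw [le_div_iff₀ hr2]; nlinarith [ht.1]
      have hm2 : t / Real.sqrt 2 ≤ 1 := by
        rw [div_le_one hr2]; exact ht.2.le
      have hca := Real.cos_arccos hm1 hm2
      refine ⟨Real.arccos (t / Real.sqrt 2), ⟨?_, ?_⟩, ?_⟩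
      · apply Real.arccos_pos.mpr
        rw [div_lt_one hr2]; exact ht.2
      · have harc : Real.arccos (t / Real.sqrt 2) ≠ π := by
          intro h
          rw [h, Real.cos_pi] at hca
          have : t = -Real.sqrt 2 := by
            field_simp at hca; linarith
          exact absurd this (ne_of_gt ht.1)
        exact lt_of_le_of_ne (Real.arccos_le_pi _) harc
      · rw [hf]; dsimp only
        rw [hca]; field_simp
  have hderiv : ∀ θ ∈ Ioo (0:ℝ) π, HasDerivWithinAt f (-(Real.sqrt 2 * Real.sin θ)) (Ioo 0 π) θ := by
    intro θ _
    have h := HasDerivAt.const_mul (Real.sqrt 2) (Real.hasDerivAt_cos θ)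
    have h2 : HasDerivAt f (-(Real.sqrt 2 * Real.sin θ)) θ := by
      rw [hf]
      rw [show -(Real.sqrt 2 * Real.sin θ) = Real.sqrt 2 * -Real.sin θ by ring]
      exact h
    exact h2.hasDerivWithinAt
  have hinj : InjOn f (Ioo 0 π) := by
    intro a ha b hb hab
    have : Real.cos a = Real.cos b := by
      rw [hf] at hab; dsimp only at hab
      exact mul_left_cancel₀ hr2.ne' hab
    exact Real.injOn_cos ⟨ha.1.le, ha.2.le⟩ ⟨hb.1.le, hb.2.le⟩ this
  have hsub := integral_image_eq_integral_abs_deriv_smul measurableSet_Ioo hderiv hinj g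
  rw [himg] at hsub
  rw [h2, hsub]
  -- simplify integrand
  have h3 : ∀ θ ∈ Ioo (0:ℝ) π, |(-(Real.sqrt 2 * Real.sin θ))| • g (f θ)
      = (2/π) * (Real.sin θ^2 * Real.log |x - Real.sqrt 2 * Real.cos θ|) := by
    intro θ hθ
    have hs : 0 < Real.sin θ := Real.sin_pos_of_pos_of_lt_pi hθ.1 hθ.2
    have habs : |(-(Real.sqrt 2 * Real.sin θ))| = Real.sqrt 2 * Real.sin θ := by
      rw [abs_neg, abs_of_pos (by positivity)]
    have hsqrt : Real.sqrt (2 - (Real.sqrt 2 * Real.cos θ) ^ 2) = Real.sqrt 2 * Real.sin θ := by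
      have h1 : 2 - (Real.sqrt 2 * Real.cos θ) ^ 2 = 2 * Real.sin θ ^ 2 := by
        have := Real.sin_sq_add_cos_sq θ
        nlinarith
      rw [h1, show (2 : ℝ) * Real.sin θ ^2 = (Real.sqrt 2 * Real.sin θ)^2 by nlinarith,
        Real.sqrt_sq (by positivity)]
    rw [habs, smul_eq_mul, hg, hf]
    dsimp only
    rw [hsqrt]
    have : Real.sqrt 2 * Real.sin θ * (1 / π * (Real.sqrt 2 * Real.sin θ) *
        Real.log |x - Real.sqrt 2 * Real.cos θ|)
        = (Real.sqrt 2 * Real.sqrt 2) * (Real.sin θ * Real.sin θ) * (1/π) *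
          Real.log |x - Real.sqrt 2 * Real.cos θ| := by ring
    rw [this, Real.mul_self_sqrt (by norm_num)]
    ring
  rw [setIntegral_congr_fun measurableSet_Ioo h3, MeasureTheory.integral_const_mul,
    ← MeasureTheory.integral_Ioc_eq_integral_Ioo, ← intervalIntegral.integral_of_le hπ.le]

lemma cos_ne_one_aux {φ θ : ℝ} (hφ0 : 0 ≤ φ) (hφπ : φ ≤ π) (hθ : θ ∈ Ioc (0:ℝ) π)
    (h1 : θ ≠ φ) (h2 : θ ≠ 2*π - φ) :
    Real.cos (θ - φ) ≠ 1 ∧ Real.cos (θ + φ) ≠ 1 := by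
  constructor
  · intro hc
    have := (Real.cos_eq_one_iff_of_lt_of_lt (by linarith [hθ.1, hθ.2, Real.pi_pos] : -(2*π) < θ - φ)
      (by linarith [hθ.2, Real.pi_pos] : θ - φ < 2*π)).mp hc
    exact h1 (by linarith)
  · intro hc
    have h2π : θ + φ < 2*π := by
      rcases lt_or_eq_of_le hθ.2 with h | h
      · linarith
      · rcases lt_or_eq_of_le hφπ with h' | h'
        · linarith
        · exact (h2 (by rw [h, h']; ring)).elim
    have := (Real.cos_eq_one_iff_of_lt_of_lt
      (by linarith [hθ.1, Real.pi_pos] : -(2*π) < θ + φ) h2π).mp hc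
    linarith [hθ.1]

lemma caseA (x : ℝ) (hx : |x| ≤ Real.sqrt 2) :
    (∫ θ in (0:ℝ)..π, Real.sin θ^2 * Real.log |x - Real.sqrt 2 * Real.cos θ|)
    = (π/2) * (x^2/2 - 1/2 - (1/2)*Real.log 2) := by
  have hπ := Real.pi_pos
  have hr2 : (0:ℝ) < Real.sqrt 2 := Real.sqrt_pos.mpr two_pos
  have hsq2 : Real.sqrt 2 ^ 2 = 2 := Real.sq_sqrt (by norm_num)
  set φ := Real.arccos (x / Real.sqrt 2) with hφ
  have hm1 : -1 ≤ x / Real.sqrt 2 := by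
    rw [le_div_iff₀ hr2]; nlinarith [neg_abs_le x]
  have hm2 : x / Real.sqrt 2 ≤ 1 := by
    rw [div_le_one hr2]; nlinarith [le_abs_self x]
  have hφ0 : 0 ≤ φ := Real.arccos_nonneg _
  have hφπ : φ ≤ π := Real.arccos_le_pi _
  have hcφ : Real.cos φ = x / Real.sqrt 2 := Real.cos_arccos hm1 hm2
  have hxφ : x = Real.sqrt 2 * Real.cos φ := by
    rw [hcφ]; field_simp
  -- a.e. pointwise identity
  set μ := volume.restrict (Ioc (0:ℝ) π) with hμ
  have hne : ∀ c : ℝ, ∀ᵐ θ ∂μ, θ ≠ c := by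
    intro c
    refine ae_restrict_of_ae (ae_iff.mpr ?_)
    have : {θ : ℝ | ¬θ ≠ c} = {c} := by ext θ; simp
    rw [this]; exact Real.volume_singleton
  have hae : ∀ᵐ θ ∂μ, Real.sin θ^2 * Real.log |x - Real.sqrt 2 * Real.cos θ|
      = Real.sin θ^2 * Real.log (Real.sqrt 2)
        + (1/2) * (Real.sin θ^2 * (Real.log (1 - Real.cos (θ-φ)) + Real.log (1 - Real.cos (θ+φ)))) := by
    filter_upwards [ae_restrict_mem measurableSet_Ioc, hne φ, hne (2*π - φ)] with θ hmem h1 h2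
    obtain ⟨hc1, hc2⟩ := cos_ne_one_aux hφ0 hφπ hmem h1 h2
    have hA : 0 < 1 - Real.cos (θ - φ) :=
      lt_of_le_of_ne (by linarith [Real.cos_le_one (θ-φ)]) (fun h => hc1 (by linarith))
    have hB : 0 < 1 - Real.cos (θ + φ) :=
      lt_of_le_of_ne (by linarith [Real.cos_le_one (θ+φ)]) (fun h => hc2 (by linarith))
    have hprod : (Real.cos φ - Real.cos θ)^2 = (1 - Real.cos (θ-φ)) * (1 - Real.cos (θ+φ)) := by
      rw [Real.cos_sub, Real.cos_add]
      have hsθ := Real.sin_sq_add_cos_sq θ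
      have hsφ := Real.sin_sq_add_cos_sq φ
      nlinarith [hsθ, hsφ]
    have hcd : Real.cos φ - Real.cos θ ≠ 0 := by
      intro h
      rw [h] at hprod
      have h0 : (0:ℝ) = (1 - Real.cos (θ-φ)) * (1 - Real.cos (θ+φ)) := by
        rw [← hprod]; ring
      nlinarith [mul_pos hA hB]
    have e1 : |x - Real.sqrt 2 * Real.cos θ| = Real.sqrt 2 * |Real.cos φ - Real.cos θ| := by
      rw [hxφ, show Real.sqrt 2 * Real.cos φ - Real.sqrt 2 * Real.cos θ
        = Real.sqrt 2 * (Real.cos φ - Real.cos θ) by ring, abs_mul, abs_of_pos hr2]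
    rw [e1, Real.log_mul hr2.ne' (abs_ne_zero.mpr hcd), Real.log_abs]
    have e2 : Real.log (Real.cos φ - Real.cos θ)
        = (1/2) * (Real.log (1 - Real.cos (θ-φ)) + Real.log (1 - Real.cos (θ+φ))) := by
      have h2log : 2 * Real.log (Real.cos φ - Real.cos θ) = Real.log ((Real.cos φ - Real.cos θ)^2) := by
        rw [Real.log_pow]; push_cast; ring
      rw [hprod, Real.log_mul hA.ne' hB.ne'] at h2log
      linarith
    rw [e2]; ring
  -- split and evaluate
  have hint2 : Integrable (fun θ => Real.sin θ^2 *
      (Real.log (1 - Real.cos (θ-φ)) + Real.log (1 - Real.cos (θ+φ)))) μ := by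
    have h := (((K2 hφ0 hφπ).add (K1 hφ0 hφπ)).continuousOn_mul
      ((Real.continuous_sin.pow 2).continuousOn) : IntervalIntegrable _ volume 0 π)
    rw [intervalIntegrable_iff_integrableOn_Ioc_of_le hπ.le] at h
    exact h.congr_fun (fun θ _ => by simp only [Pi.pow_apply]) measurableSet_Ioc
  have hint1 : Integrable (fun θ => Real.sin θ^2 * Real.log (Real.sqrt 2)) μ := by
    have h : IntervalIntegrable (fun θ => Real.sin θ^2 * Real.log (Real.sqrt 2)) volume 0 π :=
      (Continuous.intervalIntegrable (by fun_prop) _ _)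
    rwa [intervalIntegrable_iff_integrableOn_Ioc_of_le hπ.le] at h
  rw [intervalIntegral.integral_of_le hπ.le]
  show (∫ θ, Real.sin θ^2 * Real.log |x - Real.sqrt 2 * Real.cos θ| ∂μ) = _
  rw [integral_congr_ae hae, integral_add hint1 (hint2.const_mul (1/2:ℝ)),
    MeasureTheory.integral_const_mul]
  have hv1 : (∫ θ, Real.sin θ^2 * Real.log (Real.sqrt 2) ∂μ) = Real.log (Real.sqrt 2) * (π/2) := by
    rw [hμ, ← intervalIntegral.integral_of_le hπ.le, intervalIntegral.integral_mul_const,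
      integral_sin_sq'']
    ring
  have hv2 : (∫ θ, Real.sin θ^2 *
      (Real.log (1 - Real.cos (θ-φ)) + Real.log (1 - Real.cos (θ+φ))) ∂μ)
      = π * Real.cos (2*φ) / 2 - π * Real.log 2 := by
    rw [hμ, ← intervalIntegral.integral_of_le hπ.le]
    exact limit_lemma φ hφ0 hφπ
  rw [hv1, hv2]
  have hcos2 : Real.cos (2*φ) = x^2 - 1 := by
    rw [Real.cos_two_mul, hcφ, div_pow, hsq2]
    ring
  have hlogs : Real.log (Real.sqrt 2) = Real.log 2 / 2 := Real.log_sqrt (by norm_num)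
  rw [hcos2, hlogs]
  ring

lemma caseB (y : ℝ) (hy : Real.sqrt 2 < y) :
    (∫ θ in (0:ℝ)..π, Real.sin θ^2 * Real.log |y - Real.sqrt 2 * Real.cos θ|)
    = (π/2) * (y^2/2 - 1/2 - Real.log 2 - (1/2)*(y * Real.sqrt (y^2-2))
        + Real.log (y + Real.sqrt (y^2-2))) := by
  have hπ := Real.pi_pos
  have hr2 : (0:ℝ) < Real.sqrt 2 := Real.sqrt_pos.mpr two_pos
  have hsq2 : Real.sqrt 2 ^ 2 = 2 := Real.sq_sqrt (by norm_num)
  have hy0 : 0 < y := lt_trans hr2 hy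
  have hy2 : 2 < y^2 := by nlinarith
  set s := Real.sqrt (y^2 - 2) with hs
  have hs0 : 0 ≤ s := Real.sqrt_nonneg _
  have hs2 : s^2 = y^2 - 2 := Real.sq_sqrt (by linarith)
  clear_value s
  have hsy : s < y := by nlinarith
  set q := (y - s)/Real.sqrt 2 with hqdef
  have hq0 : 0 < q := div_pos (by linarith) hr2
  have hqq : Real.sqrt 2 * q = y - s := by
    rw [hqdef]; field_simp
  clear_value q
  have hprod : (y - s)*(y + s) = 2 := by nlinarith
  have hq1 : q < 1 := by
    nlinarith [mul_pos hr2 hq0]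
  have h2q : 2*q^2 = (y-s)^2 := by
    linear_combination (Real.sqrt 2 * q + (y - s)) * hqq - q^2 * hsq2
  have hquad : q^2 + 1 = Real.sqrt 2 * y * q := by
    linear_combination (1/2)*h2q - (1/2)*hprod - y*hqq
  have hq1' : 0 < 1 - q := by linarith
  have hXpos : ∀ θ : ℝ, 0 < 1 - 2*q*Real.cos θ + q^2 := by
    intro θ
    nlinarith [Real.cos_le_one θ, mul_nonneg hq0.le
      (by linarith [Real.cos_le_one θ] : (0:ℝ) ≤ 1 - Real.cos θ), sq_nonneg (1-q)]
  have hypos : ∀ θ : ℝ, 0 < y - Real.sqrt 2 * Real.cos θ := by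
    intro θ
    nlinarith [Real.cos_le_one θ, Real.neg_one_le_cos θ]
  have hcq : 0 < Real.sqrt 2/(2*q) := by positivity
  have hiden : ∀ θ : ℝ, y - Real.sqrt 2*Real.cos θ
      = (Real.sqrt 2/(2*q)) * (1 - 2*q*Real.cos θ + q^2) := by
    intro θ
    have h1 : 1 - 2*q*Real.cos θ + q^2 = Real.sqrt 2 * y * q - 2*q*Real.cos θ := by
      linarith [hquad]
    rw [h1]
    have h2 : Real.sqrt 2/(2*q) * (Real.sqrt 2 * y * q - 2*q*Real.cos θ)
        = Real.sqrt 2 * Real.sqrt 2 * y / 2 - Real.sqrt 2 * Real.cos θ := by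
      field_simp
    rw [h2, Real.mul_self_sqrt (by norm_num : (0:ℝ) ≤ 2)]
    ring
  have hptwise : ∀ θ ∈ Set.uIcc (0:ℝ) π, Real.sin θ^2 * Real.log |y - Real.sqrt 2*Real.cos θ|
      = Real.sin θ^2 * Real.log (Real.sqrt 2/(2*q))
        + Real.sin θ^2 * Real.log (1 - 2*q*Real.cos θ + q^2) := by
    intro θ _
    rw [abs_of_pos (hypos θ), hiden θ, Real.log_mul hcq.ne' (hXpos θ).ne']
    ring
  rw [intervalIntegral.integral_congr hptwise]
  have c1 : Continuous fun θ : ℝ => Real.sin θ^2 * Real.log (Real.sqrt 2/(2*q)) := by fun_prop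
  have c2 : Continuous fun θ : ℝ => Real.sin θ^2 * Real.log (1 - 2*q*Real.cos θ + q^2) := by
    refine (Real.continuous_sin.pow 2).mul ?_
    exact Continuous.log (by fun_prop) (fun θ => (hXpos θ).ne')
  rw [intervalIntegral.integral_add (c1.intervalIntegrable _ _) (c2.intervalIntegrable _ _),
    intervalIntegral.integral_mul_const, integral_sin_sq'']
  have hm := master q 0 (by rw [abs_of_pos hq0]; exact hq1)
  have hrw : (∫ θ in (0:ℝ)..π, Real.sin θ^2 *
      (Real.log (1 - 2*q*Real.cos (θ-0) + q^2) + Real.log (1 - 2*q*Real.cos (θ+0) + q^2)))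
      = ∫ θ in (0:ℝ)..π, 2 * (Real.sin θ^2 * Real.log (1 - 2*q*Real.cos θ + q^2)) := by
    apply intervalIntegral.integral_congr
    intro θ _
    simp only [sub_zero, add_zero]
    ring
  rw [hrw, intervalIntegral.integral_const_mul] at hm
  have hm2 : (∫ θ in (0:ℝ)..π, Real.sin θ^2 * Real.log (1 - 2*q*Real.cos θ + q^2))
      = π*q^2/4 := by
    have hc0 : Real.cos (2*(0:ℝ)) = 1 := by norm_num
    rw [hc0] at hm
    linarith
  rw [hm2]
  have hys0 : (0:ℝ) < y + s := by linarith
  have h3 : Real.sqrt 2 * (q*(y+s)) = Real.sqrt 2 * Real.sqrt 2 := by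
    linear_combination (y+s)*hqq + hprod - hsq2
  have hqalt : q*(y+s) = Real.sqrt 2 := mul_left_cancel₀ hr2.ne' h3
  have hfrac : Real.sqrt 2/(2*q) = (y+s)/2 := by
    rw [div_eq_div_iff (by positivity : (2*q:ℝ) ≠ 0) (by norm_num : (2:ℝ) ≠ 0)]
    linear_combination (-2) * hqalt
  have hq2 : q^2 = y^2 - 1 - y*s := by
    nlinarith [h2q, hs2]
  rw [hfrac, Real.log_div hys0.ne' two_ne_zero, hq2]
  ring

lemma Teven (z : ℝ) :
    (∫ θ in (0:ℝ)..π, Real.sin θ^2 * Real.log |(-z) - Real.sqrt 2 * Real.cos θ|)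
    = ∫ θ in (0:ℝ)..π, Real.sin θ^2 * Real.log |z - Real.sqrt 2 * Real.cos θ| := by
  have h := intervalIntegral.integral_comp_sub_left (a := 0) (b := π)
    (fun θ => Real.sin θ^2 * Real.log |z - Real.sqrt 2 * Real.cos θ|) π
  rw [sub_self, sub_zero] at h
  rw [← h]
  apply intervalIntegral.integral_congr
  intro θ _
  simp only
  rw [Real.sin_pi_sub, Real.cos_pi_sub]
  rw [show z - Real.sqrt 2 * -Real.cos θ = -((-z) - Real.sqrt 2 * Real.cos θ) by ring, abs_neg]

/-- Explicit formula of the logarithmic potential of the semicircle law. -/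
theorem PsiStar_formula :
    (∀ x : ℝ, |x| ≤ Real.sqrt 2 →
      PsiStar x = x ^ 2 / 2 - 1 / 2 - (1 / 2) * Real.log 2) ∧
    (∀ x : ℝ, Real.sqrt 2 < |x| →
      PsiStar x = x ^ 2 / 2 - 1 / 2 - Real.log 2 -
        (1 / 2) * (|x| * Real.sqrt (x ^ 2 - 2)) +
        Real.log (|x| + Real.sqrt (x ^ 2 - 2))) := by
  have hπ : (π:ℝ) ≠ 0 := Real.pi_ne_zero
  constructor
  · intro x hx
    rw [psiStar_rep x, caseA x hx]
    field_simp
  · intro x hx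
    have hT : (∫ θ in (0:ℝ)..π, Real.sin θ^2 * Real.log |x - Real.sqrt 2 * Real.cos θ|)
        = ∫ θ in (0:ℝ)..π, Real.sin θ^2 * Real.log (|(|x| - Real.sqrt 2 * Real.cos θ)|) := by
      rcases le_or_gt 0 x with h | h
      · rw [abs_of_nonneg h]
      · rw [abs_of_neg h]
        exact (Teven x).symm
    rw [psiStar_rep x, hT, caseB |x| hx, sq_abs]
    field_simp

end
end

section
/- Let A and A₁ be as in the Cauchy interlacing setup (A real symmetric N×N, A₁ its (N−1)×(N−1) lower-right principal submatrix). Let L_N(A) = (1/N)Σδ_{λ_i(A)} and L_{N−1}(A₁) = (1/(N−1))Σδ_{λ_i(A₁)} be their empirical spectral measures. Then for every function h with Lipschitz constant ≤ 1 and sup norm ≤ 1, |∫h dL_N(A) − ∫h dL_{N−1}(A₁)| ≤ (λ_{N−1}(A₁) − λ₁(A₁) + 4)/N. -/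
open Polynomial Matrix Finset
open scoped RealInnerProductSpace

private lemma aux_sorted_eq {m : ℕ} (f g : Fin m → ℝ) (hf : Monotone f) (hg : Monotone g)
    (h : Multiset.map f Finset.univ.val = Multiset.map g Finset.univ.val) : f = g := by
  apply List.ofFn_injective
  refine (fun a b c => List.Perm.eq_of_sortedLE b c a) ?_ ?_ ?_
  · rw [← Multiset.coe_eq_coe]
    simpa [List.ofFn_eq_map, Fin.univ_val_map] using h
  · exact (List.sortedLE_ofFn_iff).2 hf
  · exact (List.sortedLE_ofFn_iff).2 hg

private lemma aux_roots_prod {m : ℕ} (f : Fin m → ℝ) :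
    (∏ i, (X - C (f i))).roots = Multiset.map f Finset.univ.val := by
  have : ∏ i, (X - C (f i)) = ((Finset.univ.val.map f).map fun a => X - C a).prod := by
    rw [Multiset.map_map]; rfl
  rw [this, roots_multiset_prod_X_sub_C]

private lemma charpoly_eq_prod_eig {m : ℕ} (A : Matrix (Fin m) (Fin m) ℝ) (hA : A.IsHermitian) :
    A.charpoly = ∏ i, (X - C (hA.eigenvalues i)) := by
  let f : Module.End ℝ (EuclideanSpace ℝ (Fin m)) := A.toEuclideanLin
  have h1 : A.charpoly = f.charpoly := by
    rw [← LinearMap.charpoly_toMatrix f (EuclideanSpace.basisFun (Fin m) ℝ).toBasis]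
    congr 1
    rw [show f = Matrix.toLin (EuclideanSpace.basisFun (Fin m) ℝ).toBasis (EuclideanSpace.basisFun (Fin m) ℝ).toBasis A from rfl]
    exact (LinearMap.toMatrix_toLin _ _ A).symm
  have h2 : (LinearMap.toMatrix hA.eigenvectorBasis.toBasis hA.eigenvectorBasis.toBasis f)
      = Matrix.diagonal hA.eigenvalues := by
    ext i j
    rw [LinearMap.toMatrix_apply]
    have e : (f (hA.eigenvectorBasis.toBasis j) : EuclideanSpace ℝ (Fin m))
        = hA.eigenvalues j • hA.eigenvectorBasis.toBasis j := by
      ext k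
      have := congrFun (hA.mulVec_eigenvectorBasis j) k
      simpa [f] using this
    rw [e]
    simp [Module.Basis.repr_self, Finsupp.single_apply, Matrix.diagonal_apply, eq_comm]
    split_ifs with hij <;> simp [hij]
  have h3 : f.charpoly = (Matrix.diagonal hA.eigenvalues).charpoly := by
    rw [← h2, LinearMap.charpoly_toMatrix]
  rw [h1, h3, Matrix.charpoly_of_upperTriangular _ (Matrix.blockTriangular_diagonal _)]
  simp

/-- From a sorted list of charpoly roots, get an orthonormal eigenbasis with those eigenvalues. -/
private lemma exists_orthonormal_eigen {m : ℕ} (B : Matrix (Fin m) (Fin m) ℝ)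
    (hB : B.IsHermitian) (f : Fin m → ℝ) (hf : Monotone f)
    (hch : B.charpoly = ∏ i, (X - C (f i))) :
    ∃ v : Fin m → EuclideanSpace ℝ (Fin m), Orthonormal ℝ v ∧
      ∀ i, B.toEuclideanLin (v i) = f i • v i := by
  set σ := Tuple.sort hB.eigenvalues with hσ
  have hg : Monotone (hB.eigenvalues ∘ σ) := Tuple.monotone_sort _
  have hfg : f = hB.eigenvalues ∘ σ := by
    apply aux_sorted_eq f _ hf hg
    have h1 : Multiset.map f Finset.univ.val
        = Multiset.map hB.eigenvalues Finset.univ.val := by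
      rw [← aux_roots_prod f, ← aux_roots_prod hB.eigenvalues, ← hch,
        ← charpoly_eq_prod_eig B hB]
    rw [h1]
    have : Finset.univ.val.map ⇑σ = Finset.univ.val := by
      have := congrArg Finset.val (Finset.map_univ_equiv σ)
      simpa [Finset.map_val] using this
    calc Multiset.map hB.eigenvalues Finset.univ.val
        = Multiset.map hB.eigenvalues (Finset.univ.val.map ⇑σ) := by rw [this]
      _ = Multiset.map (hB.eigenvalues ∘ σ) Finset.univ.val := by
          rw [Multiset.map_map]
  refine ⟨fun i => hB.eigenvectorBasis (σ i),
    hB.eigenvectorBasis.orthonormal.comp _ σ.injective, fun i => ?_⟩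
  ext k
  have := congrFun (hB.mulVec_eigenvectorBasis (σ i)) k
  simpa [hfg] using this

private lemma rayleigh_le_of_mem_span {m : ℕ} (T : Module.End ℝ (EuclideanSpace ℝ (Fin m)))
    (w : Fin m → EuclideanSpace ℝ (Fin m)) (hw : Orthonormal ℝ w) (e : Fin m → ℝ)
    (hT : ∀ i, T (w i) = e i • w i) (c : ℝ) (S : Finset (Fin m)) (hS : ∀ i ∈ S, e i ≤ c)
    {x : EuclideanSpace ℝ (Fin m)}
    (hx : x ∈ Submodule.span ℝ (Set.range fun i : S => w i)) :
    ⟪x, T x⟫ ≤ c * ⟪x, x⟫ := by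
  obtain ⟨cf, rfl⟩ := Submodule.mem_span_range_iff_exists_fun ℝ |>.1 hx
  have hw' : Orthonormal ℝ (fun i : S => w i) := hw.comp _ Subtype.val_injective
  have hTx : T (∑ i : S, cf i • w i) = ∑ i : S, (cf i * e i) • w i := by
    rw [map_sum]
    refine Finset.sum_congr rfl fun i _ => ?_
    rw [T.map_smul, hT, smul_smul]
  rw [hTx]
  have h1 : ⟪∑ i : S, cf i • w i, ∑ i : S, (cf i * e i) • w i⟫
      = ∑ i : S, cf i * (cf i * e i) := by
    simpa using hw'.inner_sum cf (fun i => cf i * e i) Finset.univ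
  have h2 : ⟪∑ i : S, cf i • w i, ∑ i : S, cf i • w i⟫ = ∑ i : S, cf i * cf i := by
    simpa using hw'.inner_sum cf cf Finset.univ
  rw [h1, h2, Finset.mul_sum]
  refine Finset.sum_le_sum fun i _ => ?_
  have := hS i i.2
  nlinarith [sq_nonneg (cf i)]

private lemma rayleigh_ge_of_mem_span {m : ℕ} (T : Module.End ℝ (EuclideanSpace ℝ (Fin m)))
    (w : Fin m → EuclideanSpace ℝ (Fin m)) (hw : Orthonormal ℝ w) (e : Fin m → ℝ)
    (hT : ∀ i, T (w i) = e i • w i) (c : ℝ) (S : Finset (Fin m)) (hS : ∀ i ∈ S, c ≤ e i)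
    {x : EuclideanSpace ℝ (Fin m)}
    (hx : x ∈ Submodule.span ℝ (Set.range fun i : S => w i)) :
    c * ⟪x, x⟫ ≤ ⟪x, T x⟫ := by
  have := rayleigh_le_of_mem_span (-T) w hw (-e) (fun i => by simp [hT i, neg_smul])
    (-c) S (fun i hi => by simpa using neg_le_neg (hS i hi)) hx
  simp only [LinearMap.neg_apply, inner_neg_right, Pi.neg_apply, neg_mul] at this
  linarith

private lemma finrank_span_orthonormal {F : Type*} [NormedAddCommGroup F]
    [InnerProductSpace ℝ F] {ι : Type*} [Fintype ι] {v : ι → F}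
    (hv : Orthonormal ℝ v) (S : Finset ι) :
    Module.finrank ℝ (Submodule.span ℝ (Set.range fun i : S => v i)) = S.card := by
  have h := finrank_span_eq_card (R := ℝ)
    (b := fun i : S => v i) ((hv.comp _ Subtype.val_injective).linearIndependent)
  rw [h]
  exact Fintype.card_coe S

private def Emap (n : ℕ) : EuclideanSpace ℝ (Fin (n+1)) →ₗ[ℝ] EuclideanSpace ℝ (Fin (n+2)) where
  toFun v := WithLp.toLp 2 (Fin.cons (0:ℝ) v.ofLp : Fin (n+2) → ℝ)
  map_add' a b := by
    ext k
    refine Fin.cases ?_ (fun k => ?_) k <;>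
      simp [Fin.cons_zero, Fin.cons_succ, PiLp.add_apply]
  map_smul' c a := by
    ext k
    refine Fin.cases ?_ (fun k => ?_) k <;>
      simp [Fin.cons_zero, Fin.cons_succ, PiLp.smul_apply, smul_eq_mul]

private lemma Emap_apply (n : ℕ) (v : EuclideanSpace ℝ (Fin (n+1))) :
    Emap n v = WithLp.toLp 2 (Fin.cons (0:ℝ) v.ofLp : Fin (n+2) → ℝ) := rfl

private lemma Emap_inner (n : ℕ) (v w : EuclideanSpace ℝ (Fin (n+1))) :
    ⟪Emap n v, Emap n w⟫ = ⟪v, w⟫ := by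
  simp [PiLp.inner_apply, RCLike.inner_apply, Emap_apply, Fin.sum_univ_succ]

private lemma Emap_quad (n : ℕ) (A : Matrix (Fin (n+2)) (Fin (n+2)) ℝ)
    (v : EuclideanSpace ℝ (Fin (n+1))) :
    ⟪Emap n v, A.toEuclideanLin (Emap n v)⟫
      = ⟪v, (A.submatrix Fin.succ Fin.succ).toEuclideanLin v⟫ := by
  simp [PiLp.inner_apply, RCLike.inner_apply, Emap_apply, Matrix.ofLp_toLpLin,
    Matrix.mulVec, dotProduct, Fin.sum_univ_succ, Matrix.submatrix_apply]

private lemma exists_ne_zero_mem_inf {m : ℕ} (U W : Submodule ℝ (EuclideanSpace ℝ (Fin m)))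
    (h : m < Module.finrank ℝ U + Module.finrank ℝ W) :
    ∃ x : EuclideanSpace ℝ (Fin m), x ≠ 0 ∧ x ∈ U ∧ x ∈ W := by
  have hsum := Submodule.finrank_sup_add_finrank_inf_eq U W
  have h1 : Module.finrank ℝ ↥(U ⊔ W) ≤ m :=
    le_trans (Submodule.finrank_le _) (le_of_eq finrank_euclideanSpace_fin)
  have h2 : 0 < Module.finrank ℝ ↥(U ⊓ W) := by omega
  obtain ⟨x, hx⟩ := Module.finrank_pos_iff_exists_ne_zero.mp h2
  exact ⟨x, by simpa [Submodule.coe_eq_zero] using hx, x.2.1, x.2.2⟩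

private lemma interlacing_core
    (n : ℕ) (A : Matrix (Fin (n + 2)) (Fin (n + 2)) ℝ) (hA : A.IsHermitian)
    (A₁ : Matrix (Fin (n + 1)) (Fin (n + 1)) ℝ)
    (hA₁ : A₁ = A.submatrix Fin.succ Fin.succ)
    (lam : Fin (n + 2) → ℝ) (mu : Fin (n + 1) → ℝ)
    (hlam_mono : Monotone lam) (hmu_mono : Monotone mu)
    (hlam : A.charpoly = ∏ i, (X - C (lam i)))
    (hmu : A₁.charpoly = ∏ i, (X - C (mu i))) :
    ∀ j : Fin (n + 1), lam j.castSucc ≤ mu j ∧ mu j ≤ lam j.succ := by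
  have hA₁h : A₁.IsHermitian := hA₁ ▸ hA.submatrix Fin.succ
  obtain ⟨w, hw, hwT⟩ := exists_orthonormal_eigen A hA lam hlam_mono hlam
  obtain ⟨u, hu, huT⟩ := exists_orthonormal_eigen A₁ hA₁h mu hmu_mono hmu
  have huE : Orthonormal ℝ (fun i => Emap n (u i)) := by
    rw [orthonormal_iff_ite] at hu ⊢
    intro i j
    rw [Emap_inner]
    exact hu i j
  have hquad : ∀ v, ⟪Emap n v, A.toEuclideanLin (Emap n v)⟫ = ⟪v, A₁.toEuclideanLin v⟫ := by
    intro v; rw [hA₁]; exact Emap_quad n A v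
  have key : ∀ (S₁ : Finset (Fin (n+1))) (S₂ : Finset (Fin (n+2))),
      n + 3 ≤ S₁.card + S₂.card → ∀ a b : ℝ,
      ((∀ i ∈ S₁, a ≤ mu i) ∧ (∀ i ∈ S₂, lam i ≤ b)) ∨
      ((∀ i ∈ S₂, a ≤ lam i) ∧ (∀ i ∈ S₁, mu i ≤ b)) → a ≤ b := by
    intro S₁ S₂ hcard a b hcase
    set U := Submodule.span ℝ (Set.range fun i : S₁ => Emap n (u i)) with hU
    set W := Submodule.span ℝ (Set.range fun i : S₂ => w i) with hW
    have hrU : Module.finrank ℝ U = S₁.card := finrank_span_orthonormal huE S₁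
    have hrW : Module.finrank ℝ W = S₂.card := finrank_span_orthonormal hw S₂
    obtain ⟨x, hx0, hxU, hxW⟩ := exists_ne_zero_mem_inf U W (by omega)
    have hUeq : U = Submodule.map (Emap n) (Submodule.span ℝ (Set.range fun i : S₁ => u i)) := by
      rw [Submodule.map_span, hU, ← Set.range_comp]
      rfl
    rw [hUeq] at hxU
    obtain ⟨y, hy, rfl⟩ := hxU
    have hyx : ⟪y, y⟫ = ⟪Emap n y, Emap n y⟫ := (Emap_inner n y y).symm
    have hpos : (0:ℝ) < ⟪Emap n y, Emap n y⟫ := by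
      refine lt_of_le_of_ne real_inner_self_nonneg (Ne.symm ?_)
      exact fun hc => hx0 ((inner_self_eq_zero (𝕜 := ℝ)).1 hc)
    have main : a * ⟪Emap n y, Emap n y⟫ ≤ b * ⟪Emap n y, Emap n y⟫ := by
      rcases hcase with ⟨h1, h2⟩ | ⟨h1, h2⟩
      · calc a * ⟪Emap n y, Emap n y⟫ = a * ⟪y, y⟫ := by rw [hyx]
          _ ≤ ⟪y, A₁.toEuclideanLin y⟫ := rayleigh_ge_of_mem_span _ u hu mu huT a S₁ h1 hy
          _ = ⟪Emap n y, A.toEuclideanLin (Emap n y)⟫ := (hquad y).symm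
          _ ≤ b * ⟪Emap n y, Emap n y⟫ := rayleigh_le_of_mem_span _ w hw lam hwT b S₂ h2 hxW
      · calc a * ⟪Emap n y, Emap n y⟫
            ≤ ⟪Emap n y, A.toEuclideanLin (Emap n y)⟫ :=
              rayleigh_ge_of_mem_span _ w hw lam hwT a S₂ h1 hxW
          _ = ⟪y, A₁.toEuclideanLin y⟫ := hquad y
          _ ≤ b * ⟪y, y⟫ := rayleigh_le_of_mem_span _ u hu mu huT b S₁ h2 hy
          _ = b * ⟪Emap n y, Emap n y⟫ := by rw [hyx]
    exact le_of_mul_le_mul_right main hpos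
  intro j
  constructor
  · refine key (Iic j) (Ici j.castSucc) ?_ _ _ (Or.inr ⟨?_, ?_⟩)
    · rw [Fin.card_Iic, Fin.card_Ici]
      have := j.isLt
      simp [Fin.val_succ]
      omega
    · exact fun i hi => hlam_mono (Finset.mem_Ici.1 hi)
    · exact fun i hi => hmu_mono (Finset.mem_Iic.1 hi)
  · refine key (Ici j) (Iic j.succ) ?_ _ _ (Or.inl ⟨?_, ?_⟩)
    · rw [Fin.card_Ici, Fin.card_Iic]
      have := j.isLt
      simp [Fin.val_succ]
      omega
    · exact fun i hi => hmu_mono (Finset.mem_Ici.1 hi)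
    · exact fun i hi => hlam_mono (Finset.mem_Iic.1 hi)

private lemma telescope_mu (n : ℕ) (mu : Fin (n+1) → ℝ) :
    ∑ j : Fin n, (mu j.succ - mu j.castSucc) = mu (Fin.last n) - mu 0 := by
  set f : ℕ → ℝ := fun k => mu ⟨min k n, Nat.lt_succ_of_le (min_le_right _ _)⟩ with hf
  have h1 : ∑ j : Fin n, (mu j.succ - mu j.castSucc)
      = ∑ j : Fin n, (f (j.val + 1) - f j.val) := by
    refine Finset.sum_congr rfl fun j _ => ?_
    have hj := j.isLt
    congr 1 <;> · congr 1; apply Fin.ext; simp [hf]; try omega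
  rw [h1, Fin.sum_univ_eq_sum_range (fun k => f (k+1) - f k) n, Finset.sum_range_sub f n]
  have hn : f n = mu (Fin.last n) := by show mu _ = _; apply congrArg; apply Fin.ext; simp [hf]
  have h0 : f 0 = mu 0 := by show mu _ = _; apply congrArg; apply Fin.ext; simp [hf]
  rw [hn, h0]

/-- Bounded-Lipschitz distance between the empirical spectral measures of a
real symmetric matrix and its codimension-one principal submatrix. -/
theorem esd_interlacing_bound
    (n : ℕ) (A : Matrix (Fin (n + 2)) (Fin (n + 2)) ℝ) (hA : A.IsHermitian)
    (A₁ : Matrix (Fin (n + 1)) (Fin (n + 1)) ℝ)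
    (hA₁ : A₁ = A.submatrix Fin.succ Fin.succ)
    (lam : Fin (n + 2) → ℝ) (mu : Fin (n + 1) → ℝ)
    (hlam_mono : Monotone lam) (hmu_mono : Monotone mu)
    (hlam : A.charpoly = ∏ i, (X - C (lam i)))
    (hmu : A₁.charpoly = ∏ i, (X - C (mu i))) :
    ∀ h : ℝ → ℝ, LipschitzWith 1 h → (∀ x, |h x| ≤ 1) →
      |(∑ i, h (lam i)) / (n + 2) - (∑ i, h (mu i)) / (n + 1)| ≤
        (mu (Fin.last n) - mu 0 + 4) / (n + 2) := by
  intro h hL hsup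
  have interlace := interlacing_core n A hA A₁ hA₁ lam mu hlam_mono hmu_mono hlam hmu
  have lip : ∀ a b : ℝ, |h a - h b| ≤ |a - b| := fun a b => by
    have := hL.dist_le_mul a b
    simpa [Real.dist_eq] using this
  set T := ∑ i, h (lam i) with hT
  set S := ∑ j, h (mu j) with hS
  have hTS : |T - S| ≤ mu (Fin.last n) - mu 0 + 3 := by
    have hsplit : T - S = h (lam 0) + ∑ j : Fin (n+1), (h (lam j.succ) - h (mu j)) := by
      rw [hT, hS, Fin.sum_univ_succ (f := fun i => h (lam i)), Finset.sum_sub_distrib]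
      ring
    have h2 : ∑ j : Fin (n+1), (h (lam j.succ) - h (mu j))
        = ∑ j : Fin n, (h (lam (j.castSucc).succ) - h (mu j.castSucc))
          + (h (lam (Fin.last n).succ) - h (mu (Fin.last n))) :=
      Fin.sum_univ_castSucc _
    have hmid : |∑ j : Fin n, (h (lam (j.castSucc).succ) - h (mu j.castSucc))|
        ≤ mu (Fin.last n) - mu 0 := by
      calc |∑ j : Fin n, (h (lam (j.castSucc).succ) - h (mu j.castSucc))|
          ≤ ∑ j : Fin n, |h (lam (j.castSucc).succ) - h (mu j.castSucc)| :=
            Finset.abs_sum_le_sum_abs _ _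
        _ ≤ ∑ j : Fin n, (mu j.succ - mu j.castSucc) := by
            refine Finset.sum_le_sum fun j _ => ?_
            have hlb : mu j.castSucc ≤ lam (j.castSucc).succ := (interlace j.castSucc).2
            have hub : lam (j.castSucc).succ ≤ mu j.succ := by
              have := (interlace j.succ).1
              rwa [← Fin.succ_castSucc] at this
            calc |h (lam (j.castSucc).succ) - h (mu j.castSucc)|
                ≤ |lam (j.castSucc).succ - mu j.castSucc| := lip _ _
              _ = lam (j.castSucc).succ - mu j.castSucc := abs_of_nonneg (by linarith)
              _ ≤ mu j.succ - mu j.castSucc := by linarith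
        _ = mu (Fin.last n) - mu 0 := telescope_mu n mu
    have hlast : |h (lam (Fin.last n).succ) - h (mu (Fin.last n))| ≤ 2 := by
      have a1 := hsup (lam (Fin.last n).succ)
      have a2 := hsup (mu (Fin.last n))
      calc |h (lam (Fin.last n).succ) - h (mu (Fin.last n))|
          ≤ |h (lam (Fin.last n).succ)| + |h (mu (Fin.last n))| := abs_sub _ _
        _ ≤ 2 := by linarith
    have h0 := hsup (lam 0)
    calc |T - S| = |h (lam 0) + ∑ j : Fin (n+1), (h (lam j.succ) - h (mu j))| := by
          rw [hsplit]
      _ ≤ |h (lam 0)| + |∑ j : Fin (n+1), (h (lam j.succ) - h (mu j))| := abs_add_le _ _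
      _ ≤ |h (lam 0)| + (|∑ j : Fin n, (h (lam (j.castSucc).succ) - h (mu j.castSucc))|
            + |h (lam (Fin.last n).succ) - h (mu (Fin.last n))|) := by
          rw [h2]
          exact add_le_add le_rfl (abs_add_le _ _)
      _ ≤ mu (Fin.last n) - mu 0 + 3 := by linarith
  have hSb : |S| ≤ (n:ℝ) + 1 := by
    calc |S| ≤ ∑ j : Fin (n+1), |h (mu j)| := Finset.abs_sum_le_sum_abs _ _
      _ ≤ ∑ _j : Fin (n+1), (1:ℝ) := Finset.sum_le_sum fun j _ => hsup _
      _ = (n:ℝ) + 1 := by simp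
  have hN1 : (0:ℝ) < (n:ℝ) + 1 := by positivity
  have hN2 : (0:ℝ) < (n:ℝ) + 2 := by positivity
  have key : T / ((n:ℝ) + 2) - S / ((n:ℝ) + 1)
      = (T - S - S / ((n:ℝ) + 1)) / ((n:ℝ) + 2) := by
    field_simp
    ring
  rw [key, abs_div, abs_of_pos hN2]
  have hnum : |T - S - S / ((n:ℝ) + 1)| ≤ mu (Fin.last n) - mu 0 + 4 := by
    have h3 : |S / ((n:ℝ) + 1)| ≤ 1 := by
      rw [abs_div, abs_of_pos hN1, div_le_one hN1]
      exact hSb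
    calc |T - S - S / ((n:ℝ) + 1)| ≤ |T - S| + |S / ((n:ℝ) + 1)| := abs_sub _ _
      _ ≤ mu (Fin.last n) - mu 0 + 4 := by linarith
  exact div_le_div_of_nonneg_right hnum hN2.le
end
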